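/- arXiv:1606.00047 — 12 statements merged into one kernel-verified Lean document; each statement's English description precedes it below -/
import Mathlib

section
/- Let a be a nonzero real constant. Then f satisfies the differential equation f f'' + f'² + 1 = 2a f √(f'² + 1) on I if and only if there exists a constant c such that f(u)·√(f'(u)² + 1) = a f(u)² + c for all u ∈ I. -/
noncomputable section

open Real

theorem meridian_ode_Ma_parallel_H
    (I : Set ℝ) (hIo : IsOpen I) (hIc : IsPreconnected I)
    (f : ℝ → ℝ) (hf : ContDiffOn ℝ (⊤ : ℕ∞) f I)
    (hfpos : ∀ u ∈ I, 0 < f u)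
    (hf' : ∀ u ∈ I, deriv f u ≠ 0)
    (a : ℝ) (ha : a ≠ 0) :
    (∀ u ∈ I, f u * deriv (deriv f) u + (deriv f u) ^ 2 + 1 =
        2 * a * f u * Real.sqrt ((deriv f u) ^ 2 + 1)) ↔
      ∃ c, ∀ u ∈ I, f u * Real.sqrt ((deriv f u) ^ 2 + 1) = a * (f u) ^ 2 + c := by
  set g : ℝ → ℝ := fun u => f u * Real.sqrt ((deriv f u) ^ 2 + 1) - a * (f u) ^ 2 with hg
  have hconv : Convex ℝ I := (IsPreconnected.ordConnected hIc).convex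
  have hfd : ContDiffOn ℝ (⊤ : ℕ∞) (deriv f) I := hf.deriv_of_isOpen hIo (by simp)
  have hs_pos : ∀ u : ℝ, (0:ℝ) < Real.sqrt ((deriv f u) ^ 2 + 1) := fun u =>
    Real.sqrt_pos.2 (by positivity)
  have hs_sq : ∀ u : ℝ, Real.sqrt ((deriv f u) ^ 2 + 1) ^ 2 = (deriv f u) ^ 2 + 1 := fun u =>
    Real.sq_sqrt (by positivity)
  -- g has derivative D u at each u ∈ I
  have key : ∀ u ∈ I, HasDerivAt g
      (deriv f u * Real.sqrt ((deriv f u) ^ 2 + 1) +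
        f u * (deriv f u * deriv (deriv f) u / Real.sqrt ((deriv f u) ^ 2 + 1)) -
        a * (2 * f u * deriv f u)) u := by
    intro u hu
    have hfu : HasDerivAt f (deriv f u) u :=
      ((hf.differentiableOn (by simp)).differentiableAt (hIo.mem_nhds hu)).hasDerivAt
    have hfu2 : HasDerivAt (deriv f) (deriv (deriv f) u) u :=
      ((hfd.differentiableOn (by simp)).differentiableAt (hIo.mem_nhds hu)).hasDerivAt
    have h1 : HasDerivAt (fun t => (deriv f t) ^ 2 + 1)
        (2 * deriv f u * deriv (deriv f) u) u := by
      have := (hfu2.pow 2).add_const 1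
      exact this.congr_deriv (by ring)
    have h2 : HasDerivAt (fun t => Real.sqrt ((deriv f t) ^ 2 + 1))
        (deriv f u * deriv (deriv f) u / Real.sqrt ((deriv f u) ^ 2 + 1)) u := by
      have hne : (deriv f u) ^ 2 + 1 ≠ 0 := by positivity
      have := (Real.hasDerivAt_sqrt hne).comp u h1
      refine this.congr_deriv ?_
      field_simp
    have h3 := hfu.mul h2
    have h4 : HasDerivAt (fun t => a * (f t) ^ 2) (a * (2 * f u * deriv f u)) u := by
      have := ((hfu.pow 2).const_mul a)
      exact this.congr_deriv (by ring)
    have := h3.sub h4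
    exact this
  -- D u = 0 ↔ ODE holds at u, for u ∈ I
  have equiv : ∀ u ∈ I,
      (deriv f u * Real.sqrt ((deriv f u) ^ 2 + 1) +
        f u * (deriv f u * deriv (deriv f) u / Real.sqrt ((deriv f u) ^ 2 + 1)) -
        a * (2 * f u * deriv f u) = 0) ↔
      (f u * deriv (deriv f) u + (deriv f u) ^ 2 + 1 =
        2 * a * f u * Real.sqrt ((deriv f u) ^ 2 + 1)) := by
    intro u hu
    set s := Real.sqrt ((deriv f u) ^ 2 + 1) with hsdef
    have hsne : s ≠ 0 := (hs_pos u).ne'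
    have hsq : s ^ 2 = (deriv f u) ^ 2 + 1 := hs_sq u
    constructor
    · intro h
      have h2 : deriv f u * (f u * deriv (deriv f) u + (deriv f u) ^ 2 + 1 -
          2 * a * f u * s) = 0 := by
        have := congrArg (fun x => x * s) h
        simp only [zero_mul] at this
        field_simp at this ⊢
        linear_combination this - deriv f u * hsq
      rcases mul_eq_zero.1 h2 with h3 | h3
      · exact absurd h3 (hf' u hu)
      · linarith
    · intro h
      have : deriv f u * (f u * deriv (deriv f) u + (deriv f u) ^ 2 + 1 -
          2 * a * f u * s) = 0 := by rw [h]; ring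
      have h2 : (deriv f u * s + f u * (deriv f u * deriv (deriv f) u / s) -
          a * (2 * f u * deriv f u)) * s = 0 := by
        field_simp
        linear_combination this + deriv f u * hsq
      rcases mul_eq_zero.1 h2 with h3 | h3
      · exact h3
      · exact absurd h3 hsne
  constructor
  · intro hode
    have hgd : DifferentiableOn ℝ g I := fun u hu =>
      ((key u hu).differentiableAt.differentiableWithinAt)
    have hgz : ∀ u ∈ I, fderivWithin ℝ g I u = 0 := by
      intro u hu
      have hD := key u hu
      have h0 : (deriv f u * Real.sqrt ((deriv f u) ^ 2 + 1) +
          f u * (deriv f u * deriv (deriv f) u / Real.sqrt ((deriv f u) ^ 2 + 1)) -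
          a * (2 * f u * deriv f u)) = 0 := (equiv u hu).2 (hode u hu)
      rw [h0] at hD
      have : fderivWithin ℝ g I u = fderiv ℝ g u :=
        fderivWithin_of_isOpen hIo hu
      rw [this, hD.hasFDerivAt.fderiv]
      ext; simp
    rcases I.eq_empty_or_nonempty with rfl | ⟨u₀, hu₀⟩
    · exact ⟨0, fun u hu => absurd hu (Set.notMem_empty u)⟩
    · refine ⟨g u₀, fun u hu => ?_⟩
      have := hconv.is_const_of_fderivWithin_eq_zero hgd hgz hu hu₀
      have hgu : g u = g u₀ := this
      have : f u * Real.sqrt ((deriv f u) ^ 2 + 1) - a * (f u) ^ 2 = g u₀ := hgu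
      linarith
  · rintro ⟨c, hc⟩ u hu
    have hDu := key u hu
    have hloc : g =ᶠ[nhds u] fun _ => c := by
      filter_upwards [hIo.mem_nhds hu] with v hv
      have := hc v hv
      simp only [hg]
      linarith
    have hconst : HasDerivAt g 0 u := by
      have : HasDerivAt (fun _ : ℝ => c) 0 u := hasDerivAt_const u c
      exact this.congr_of_eventuallyEq hloc
    have h0 := hDu.unique hconst
    exact (equiv u hu).1 h0
end
end

section
/- Let a be a nonzero real constant. Then f satisfies the differential equation f f'' + f'² − 1 = 2a f √(f'² − 1) on I if and only if there exists a constant c such that f(u)·√(f'(u)² − 1) = a f(u)² + c for all u ∈ I. -/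
noncomputable section

open Real

theorem meridian_ode_Mb_parallel_H
    (I : Set ℝ) (hIo : IsOpen I) (hIc : IsPreconnected I)
    (f : ℝ → ℝ) (hf : ContDiffOn ℝ (⊤ : ℕ∞) f I)
    (hfpos : ∀ u ∈ I, 0 < f u)
    (hf'sq : ∀ u ∈ I, (deriv f u) ^ 2 > 1)
    (a : ℝ) (ha : a ≠ 0) :
    (∀ u ∈ I, f u * deriv (deriv f) u + (deriv f u) ^ 2 - 1 =
        2 * a * f u * Real.sqrt ((deriv f u) ^ 2 - 1)) ↔
      ∃ c, ∀ u ∈ I, f u * Real.sqrt ((deriv f u) ^ 2 - 1) = a * (f u) ^ 2 + c := by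
  set h : ℝ → ℝ := fun x => f x * Real.sqrt ((deriv f x) ^ 2 - 1) - a * f x ^ 2 with hh
  -- basic facts at each point of I
  have key : ∀ u ∈ I, HasDerivAt h
      (deriv f u * (f u * deriv (deriv f) u + (deriv f u) ^ 2 - 1 -
        2 * a * f u * Real.sqrt ((deriv f u) ^ 2 - 1)) /
        Real.sqrt ((deriv f u) ^ 2 - 1)) u := by
    intro u hu
    have hq : (0:ℝ) < (deriv f u) ^ 2 - 1 := by linarith [hf'sq u hu]
    have hs : (0:ℝ) < Real.sqrt ((deriv f u) ^ 2 - 1) := Real.sqrt_pos.2 hq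
    have hs2 : (Real.sqrt ((deriv f u) ^ 2 - 1)) ^ 2 = (deriv f u) ^ 2 - 1 :=
      Real.sq_sqrt hq.le
    have hdf : HasDerivAt f (deriv f u) u :=
      ((hf.contDiffAt (hIo.mem_nhds hu)).differentiableAt (by simp)).hasDerivAt
    have hdf2 : HasDerivAt (deriv f) (deriv (deriv f) u) u :=
      (((hf.deriv_of_isOpen hIo (by exact_mod_cast (le_top : (⊤ : ℕ∞) + 1 ≤ ⊤) : ((⊤ : ℕ∞) : WithTop ℕ∞) + 1 ≤ ((⊤ : ℕ∞) : WithTop ℕ∞))).contDiffAt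
        (hIo.mem_nhds hu)).differentiableAt (by simp)).hasDerivAt
    have hinner : HasDerivAt (fun x => (deriv f x) ^ 2 - 1)
        (2 * (deriv f u) ^ 1 * deriv (deriv f) u) u := (hdf2.pow 2).sub_const 1
    have hsqrt : HasDerivAt (fun x => Real.sqrt ((deriv f x) ^ 2 - 1))
        (1 / (2 * Real.sqrt ((deriv f u) ^ 2 - 1)) *
          (2 * (deriv f u) ^ 1 * deriv (deriv f) u)) u :=
      (Real.hasDerivAt_sqrt hq.ne').comp u hinner
    have H : HasDerivAt h
        (deriv f u * Real.sqrt ((deriv f u) ^ 2 - 1) +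
          f u * (1 / (2 * Real.sqrt ((deriv f u) ^ 2 - 1)) *
            (2 * (deriv f u) ^ 1 * deriv (deriv f) u)) -
          a * (2 * f u ^ 1 * deriv f u)) u :=
      (hdf.mul hsqrt).sub ((hdf.pow 2).const_mul a)
    convert H using 1
    rw [div_eq_iff hs.ne']
    field_simp
    linear_combination (-(deriv f u)) * hs2
  constructor
  · intro hODE
    rcases Set.eq_empty_or_nonempty I with hI | ⟨u₀, hu₀⟩
    · exact ⟨0, by simp [hI]⟩
    refine ⟨f u₀ * Real.sqrt ((deriv f u₀) ^ 2 - 1) - a * f u₀ ^ 2, fun u hu => ?_⟩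
    have hzero : ∀ x ∈ I, HasDerivAt h 0 x := by
      intro x hx
      have := key x hx
      rwa [show f x * deriv (deriv f) x + (deriv f x) ^ 2 - 1 -
          2 * a * f x * Real.sqrt ((deriv f x) ^ 2 - 1) = 0 by
            linarith [hODE x hx], mul_zero, zero_div] at this
    have hconv : Convex ℝ I := hIc.convex
    have hconst : h u = h u₀ := by
      refine hconv.is_const_of_fderivWithin_eq_zero
        (fun x hx => ((hzero x hx).differentiableAt).differentiableWithinAt)
        (fun x hx => ?_) hu hu₀
      rw [fderivWithin_of_isOpen hIo hx]
      have h0' := (hzero x hx).hasFDerivAt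
      have e : (ContinuousLinearMap.toSpanSingleton ℝ (0 : ℝ)) = 0 := by
        ext; simp
      rw [e] at h0'
      have h0 : HasFDerivAt h (0 : ℝ →L[ℝ] ℝ) x := h0'
      exact h0.fderiv
    have : h u = h u₀ := hconst
    simp only [hh] at this
    linarith
  · rintro ⟨c, hc⟩ u hu
    have hq : (0:ℝ) < (deriv f u) ^ 2 - 1 := by linarith [hf'sq u hu]
    have hs : (0:ℝ) < Real.sqrt ((deriv f u) ^ 2 - 1) := Real.sqrt_pos.2 hq
    have hf' : deriv f u ≠ 0 := by
      intro h0
      rw [h0] at hq; norm_num at hq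
    have heq : h =ᶠ[nhds u] fun _ => c := by
      filter_upwards [hIo.mem_nhds hu] with x hx
      have := hc x hx
      simp only [hh]
      linarith
    have hd0 : deriv h u = 0 := by
      rw [heq.deriv_eq]; simp
    have := (key u hu).deriv
    rw [hd0] at this
    field_simp at this
    simp only [zero_mul, mul_eq_zero, zero_eq_mul] at this
    rcases this with h1 | h2
    · exact absurd h1 hf'
    · linarith
end
end

section
/- Let a be a nonzero real constant. Then f satisfies the differential equation f f'' + f'² − 1 = 2a f √(1 − f'²) on I if and only if there exists a constant c such that f(u)·√(1 − f'(u)²) = −a f(u)² + c for all u ∈ I. -/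
noncomputable section

open Real

/-- Constancy on open preconnected sets from zero derivative. -/
lemma const_of_hasDerivAt_zero {I : Set ℝ} (hIo : IsOpen I) (hIc : IsPreconnected I)
    {g : ℝ → ℝ} (hg : ∀ u ∈ I, HasDerivAt g 0 u) {u v : ℝ} (hu : u ∈ I) (hv : v ∈ I) :
    g u = g v := by
  haveI : PreconnectedSpace I := Subtype.preconnectedSpace hIc
  have hloc : IsLocallyConstant (fun x : I => g x.1) := by
    rw [IsLocallyConstant.iff_exists_open]
    intro x
    obtain ⟨ε, hε, hball⟩ := Metric.isOpen_iff.1 hIo (x : ℝ) x.2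
    have hU : IsOpen (((↑) : I → ℝ) ⁻¹' Metric.ball (x : ℝ) ε) :=
      Metric.isOpen_ball.preimage continuous_subtype_val
    refine ⟨((↑) : I → ℝ) ⁻¹' Metric.ball (x : ℝ) ε, hU,
      Metric.mem_ball_self (x := (x : ℝ)) hε, fun y hy => ?_⟩
    have hconv : Convex ℝ (Metric.ball (x : ℝ) ε) := convex_ball _ _
    have hdiff : DifferentiableOn ℝ g (Metric.ball (x : ℝ) ε) := fun z hz =>
      ((hg z (hball hz)).differentiableAt).differentiableWithinAt
    refine hconv.is_const_of_fderivWithin_eq_zero hdiff (fun z hz => ?_) hy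
      (Metric.mem_ball_self hε)
    rw [fderivWithin_of_isOpen Metric.isOpen_ball hz]
    have := (hg z (hball hz)).hasFDerivAt.fderiv
    rw [this]; ext; simp
  exact hloc.apply_eq_of_preconnectedSpace ⟨u, hu⟩ ⟨v, hv⟩

theorem meridian_ode_Mpp_parallel_H
    (I : Set ℝ) (hIo : IsOpen I) (hIc : IsPreconnected I)
    (f : ℝ → ℝ) (hf : ContDiffOn ℝ (⊤ : ℕ∞) f I)
    (hfpos : ∀ u ∈ I, 0 < f u)
    (hf'sq : ∀ u ∈ I, (deriv f u) ^ 2 < 1)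
    (hf' : ∀ u ∈ I, deriv f u ≠ 0)
    (a : ℝ) (ha : a ≠ 0) :
    (∀ u ∈ I, f u * deriv (deriv f) u + (deriv f u) ^ 2 - 1 =
        2 * a * f u * Real.sqrt (1 - (deriv f u) ^ 2)) ↔
      ∃ c, ∀ u ∈ I, f u * Real.sqrt (1 - (deriv f u) ^ 2) = -a * (f u) ^ 2 + c := by
  -- abbreviations
  set g : ℝ → ℝ := fun u => f u * Real.sqrt (1 - (deriv f u) ^ 2) + a * (f u) ^ 2 with hg
  have hf1 : ContDiffOn ℝ (⊤ : ℕ∞) (deriv f) I := hf.deriv_of_isOpen hIo (by simp)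
  -- derivative of g at each point of I
  have key : ∀ u ∈ I, HasDerivAt g
      (deriv f u * Real.sqrt (1 - (deriv f u) ^ 2)
        + f u * (-(2 * deriv f u * deriv (deriv f) u) / (2 * Real.sqrt (1 - (deriv f u) ^ 2)))
        + a * (2 * f u * deriv f u)) u := by
    intro u hu
    have hsq : (deriv f u) ^ 2 < 1 := hf'sq u hu
    have hspos : 0 < 1 - (deriv f u) ^ 2 := by linarith
    have hd1 : HasDerivAt f (deriv f u) u :=
      ((hf.contDiffAt (hIo.mem_nhds hu)).differentiableAt (by simp)).hasDerivAt
    have hd2 : HasDerivAt (deriv f) (deriv (deriv f) u) u :=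
      ((hf1.contDiffAt (hIo.mem_nhds hu)).differentiableAt (by simp)).hasDerivAt
    have hin : HasDerivAt (fun u => 1 - (deriv f u) ^ 2)
        (-(2 * deriv f u * deriv (deriv f) u)) u := by
      have := (hd2.pow 2).const_sub 1
      refine this.congr_deriv ?_
      ring
    have hsqrt : HasDerivAt (fun u => Real.sqrt (1 - (deriv f u) ^ 2))
        (-(2 * deriv f u * deriv (deriv f) u) / (2 * Real.sqrt (1 - (deriv f u) ^ 2))) u := by
      have := (Real.hasDerivAt_sqrt (ne_of_gt hspos)).comp u hin
      refine this.congr_deriv ?_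
      field_simp
    have := ((hd1.mul hsqrt).add (((hd1.pow 2)).const_mul a))
    refine this.congr_deriv ?_
    ring
  have hsqrtpos : ∀ u ∈ I, 0 < Real.sqrt (1 - (deriv f u) ^ 2) := fun u hu =>
    Real.sqrt_pos.2 (by have := hf'sq u hu; linarith)
  have hsq_eq : ∀ u ∈ I, (Real.sqrt (1 - (deriv f u) ^ 2)) ^ 2 = 1 - (deriv f u) ^ 2 :=
    fun u hu => Real.sq_sqrt (by have := hf'sq u hu; linarith)
  -- equivalence between the ODE and vanishing derivative of g pointwise
  have equiv : ∀ u ∈ I,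
      ((f u * deriv (deriv f) u + (deriv f u) ^ 2 - 1 =
        2 * a * f u * Real.sqrt (1 - (deriv f u) ^ 2)) ↔
      (deriv f u * Real.sqrt (1 - (deriv f u) ^ 2)
        + f u * (-(2 * deriv f u * deriv (deriv f) u) / (2 * Real.sqrt (1 - (deriv f u) ^ 2)))
        + a * (2 * f u * deriv f u)) = 0) := by
    intro u hu
    have hs := hsqrtpos u hu
    have hq := hsq_eq u hu
    have hfp := hf' u hu
    constructor
    · intro h
      field_simp
      linear_combination deriv f u * hq - deriv f u * h
    · intro h
      have h2 : deriv f u * ((1 - (deriv f u)^2) - f u * deriv (deriv f) u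
          + 2 * a * f u * Real.sqrt (1 - (deriv f u) ^ 2)) = 0 := by
        have hs' : Real.sqrt (1 - (deriv f u) ^ 2) ≠ 0 := ne_of_gt hs
        field_simp at h
        linear_combination h - deriv f u * hq
      have h3 := (mul_eq_zero.1 h2).resolve_left hfp
      linarith
  constructor
  · intro hode
    rcases Set.eq_empty_or_nonempty I with hI | ⟨u₀, hu₀⟩
    · exact ⟨0, fun u hu => by simp [hI] at hu⟩
    refine ⟨f u₀ * Real.sqrt (1 - (deriv f u₀) ^ 2) + a * (f u₀) ^ 2, fun u hu => ?_⟩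
    have hzero : ∀ v ∈ I, HasDerivAt g 0 v := by
      intro v hv
      have := key v hv
      rwa [(equiv v hv).1 (hode v hv)] at this
    have := const_of_hasDerivAt_zero hIo hIc hzero hu hu₀
    simp only [hg] at this
    linarith
  · rintro ⟨c, hc⟩
    intro u hu
    refine (equiv u hu).2 ?_
    have hgc : ∀ v ∈ I, g v = c := by
      intro v hv
      simp only [hg]
      have := hc v hv
      linarith
    have hev : g =ᶠ[nhds u] fun _ => c := by
      filter_upwards [hIo.mem_nhds hu] with v hv using hgc v hv
    have hderiv0 : HasDerivAt g 0 u := by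
      have : HasDerivAt (fun _ : ℝ => c) 0 u := hasDerivAt_const u c
      exact this.congr_of_eventuallyEq hev
    exact (hderiv0.unique (key u hu)).symm
end
end

section
/- f satisfies the differential equation f f'' + f'² + 1 = 0 on I if and only if there exist real constants a, b such that f(u)² = −u² + 2au + b for all u ∈ I. -/
noncomputable section

open Real

/-- deriv version of the constancy lemma on an open convex set. -/
lemma const_of_deriv_zero_on {I : Set ℝ} (hIo : IsOpen I) (hconv : Convex ℝ I)
    (g : ℝ → ℝ) (hg : ∀ u ∈ I, DifferentiableAt ℝ g u)
    (hg' : ∀ u ∈ I, deriv g u = 0) {x y : ℝ} (hx : x ∈ I) (hy : y ∈ I) : g x = g y := by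
  refine hconv.is_const_of_fderivWithin_eq_zero
    (fun u hu => (hg u hu).differentiableWithinAt) (fun u hu => ?_) hx hy
  rw [fderivWithin_of_isOpen hIo hu]
  ext v
  simp [← toSpanSingleton_deriv, hg' u hu]

/-- A function with vanishing second derivative on an open convex set is affine there. -/
lemma affine_of_deriv2_zero {I : Set ℝ} (hIo : IsOpen I) (hconv : Convex ℝ I)
    (g : ℝ → ℝ) (hg : ∀ u ∈ I, DifferentiableAt ℝ g u)
    (hg' : ∀ u ∈ I, DifferentiableAt ℝ (deriv g) u)
    (hg'' : ∀ u ∈ I, deriv (deriv g) u = 0) :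
    ∃ c d, ∀ u ∈ I, g u = c * u + d := by
  rcases I.eq_empty_or_nonempty with rfl | ⟨x₀, hx₀⟩
  · exact ⟨0, 0, fun u hu => absurd hu (Set.notMem_empty u)⟩
  set c := deriv g x₀ with hc
  have hderivc : ∀ u ∈ I, deriv g u = c :=
    fun u hu => const_of_deriv_zero_on hIo hconv (deriv g) hg' hg'' hu hx₀
  refine ⟨c, g x₀ - c * x₀, fun u hu => ?_⟩
  have hlin : ∀ v ∈ I, DifferentiableAt ℝ (fun w => g w - c * w) v :=
    fun v hv => (hg v hv).sub ((differentiableAt_id.const_mul c))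
  have hcst : (fun w => g w - c * w) u = (fun w => g w - c * w) x₀ := by
    refine const_of_deriv_zero_on hIo hconv _ hlin (fun v hv => ?_) hu hx₀
    have : HasDerivAt (fun w => g w - c * w) (deriv g v - c) v :=
      (hg v hv).hasDerivAt.sub (((hasDerivAt_id v).const_mul c).congr_deriv (by first | ring | (simp only [id_eq]; ring)))
    rw [this.deriv, hderivc v hv, sub_self]
  have := hcst
  simp only at this
  linarith

theorem meridian_ode_Ma_case_i
    (I : Set ℝ) (hIo : IsOpen I) (hIc : IsPreconnected I)
    (f : ℝ → ℝ) (hf : ContDiffOn ℝ (⊤ : ℕ∞) f I)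
    (hfpos : ∀ u ∈ I, 0 < f u)
 :
    (∀ u ∈ I, f u * deriv (deriv f) u + (deriv f u) ^ 2 + 1 = 0) ↔
      ∃ a b, ∀ u ∈ I, (f u) ^ 2 = -u ^ 2 + 2 * a * u + b := by
  have hconv : Convex ℝ I := hIc.convex
  -- basic differentiability facts
  have hfd : ∀ u ∈ I, HasDerivAt f (deriv f u) u := fun u hu =>
    ((hf.contDiffAt (hIo.mem_nhds hu)).differentiableAt (by simp)).hasDerivAt
  have hdf : ContDiffOn ℝ (⊤ : ℕ∞) (deriv f) I := hf.deriv_of_isOpen hIo (by simp)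
  have hfd2 : ∀ u ∈ I, HasDerivAt (deriv f) (deriv (deriv f) u) u := fun u hu =>
    ((hdf.contDiffAt (hIo.mem_nhds hu)).differentiableAt (by simp)).hasDerivAt
  constructor
  · intro hode
    -- g = f² + u² has zero second derivative
    set g : ℝ → ℝ := fun u => f u ^ 2 + u ^ 2 with hgdef
    set G : ℝ → ℝ := fun u => 2 * f u * deriv f u + 2 * u with hGdef
    have hgG : ∀ u ∈ I, HasDerivAt g (G u) u := by
      intro u hu
      have h1 : HasDerivAt (fun w => f w ^ 2) (2 * f u * deriv f u) u := by
        simpa [Nat.sub_self, pow_one] using ((hfd u hu).fun_pow 2).congr_deriv (by first | ring | (simp only [id_eq]; ring))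
      have h2 : HasDerivAt (fun w : ℝ => w ^ 2) (2 * u) u := by
        simpa using hasDerivAt_pow 2 u
      exact (h1.add h2)
    have hderivg : Set.EqOn (deriv g) G I := fun u hu => (hgG u hu).deriv
    have hG' : ∀ u ∈ I, HasDerivAt G
        (2 * (deriv f u * deriv f u + f u * deriv (deriv f) u) + 2) u := by
      intro u hu
      have h1 : HasDerivAt (fun w => 2 * f w * deriv f w)
          (2 * (deriv f u * deriv f u + f u * deriv (deriv f) u)) u := by
        have := (((hfd u hu).const_mul 2).mul (hfd2 u hu))
        exact this.congr_deriv (by first | ring | (simp only [id_eq]; ring))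
      have h2 : HasDerivAt (fun w : ℝ => 2 * w) 2 u := by
        simpa using (hasDerivAt_id u).const_mul 2
      exact h1.add h2
    have hgdiff : ∀ u ∈ I, DifferentiableAt ℝ g u :=
      fun u hu => (hgG u hu).differentiableAt
    have hgdiff' : ∀ u ∈ I, DifferentiableAt ℝ (deriv g) u := by
      intro u hu
      exact (hG' u hu).differentiableAt.congr_of_eventuallyEq
        (Filter.eventuallyEq_of_mem (hIo.mem_nhds hu) (fun v hv => (hderivg hv).symm)).symm
    have hg'' : ∀ u ∈ I, deriv (deriv g) u = 0 := by
      intro u hu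
      have heq : deriv (deriv g) u = deriv G u :=
        Filter.EventuallyEq.deriv_eq
          (Filter.eventuallyEq_of_mem (hIo.mem_nhds hu) hderivg)
      rw [heq, (hG' u hu).deriv]
      have := hode u hu
      nlinarith [this]
    obtain ⟨c, d, hcd⟩ := affine_of_deriv2_zero hIo hconv g hgdiff hgdiff' hg''
    refine ⟨c / 2, d, fun u hu => ?_⟩
    have := hcd u hu
    simp only [hgdef] at this
    linarith
  · rintro ⟨a, b, hab⟩
    intro u hu
    -- first: f f' = a - u on I
    have key : ∀ v ∈ I, f v * deriv f v = a - v := by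
      intro v hv
      have h1 : HasDerivAt (fun w => f w ^ 2) (2 * f v * deriv f v) v := by
        simpa [Nat.sub_self, pow_one] using ((hfd v hv).fun_pow 2).congr_deriv (by first | ring | (simp only [id_eq]; ring))
      have h2 : HasDerivAt (fun w : ℝ => -w ^ 2 + 2 * a * w + b) (-(2 * v) + 2 * a) v := by
        have h3 : HasDerivAt (fun w : ℝ => 2 * a * w) (2 * a) v := by
          simpa using (hasDerivAt_id v).const_mul (2 * a)
        have := ((hasDerivAt_pow 2 v).neg.add h3).add_const b
        exact this.congr_deriv (by norm_num)
      have heq : (fun w => f w ^ 2) =ᶠ[nhds v] (fun w : ℝ => -w ^ 2 + 2 * a * w + b) :=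
        Filter.eventuallyEq_of_mem (hIo.mem_nhds hv) (fun w hw => hab w hw)
      have := h1.congr_of_eventuallyEq heq.symm |>.unique h2
      linarith
    have hF : HasDerivAt (fun w => f w * deriv f w)
        (deriv f u * deriv f u + f u * deriv (deriv f) u) u := by
      exact ((hfd u hu).mul (hfd2 u hu)).congr_deriv (by first | ring | (simp only [id_eq]; ring))
    have h2 : HasDerivAt (fun w : ℝ => a - w) (-1) u := by
      simpa using ((hasDerivAt_id u).const_sub a)
    have heq : (fun w => f w * deriv f w) =ᶠ[nhds u] (fun w : ℝ => a - w) :=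
      Filter.eventuallyEq_of_mem (hIo.mem_nhds hu) key
    have := hF.congr_of_eventuallyEq heq.symm |>.unique h2
    nlinarith [this]
end
end

section
/- f satisfies the differential equation f f'' + f'² − 1 = 0 on I if and only if there exist real constants a, b such that f(u)² = u² + 2au + b for all u ∈ I. -/
noncomputable section

open Real

private lemma const_on_of_hasDerivAt_zero (I : Set ℝ) (hIo : IsOpen I)
    (hIc : IsPreconnected I) (g : ℝ → ℝ) (hg : ∀ u ∈ I, HasDerivAt g 0 u)
    {x y : ℝ} (hx : x ∈ I) (hy : y ∈ I) : g x = g y := by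
  have hconv : Convex ℝ I := hIc.ordConnected.convex
  refine hconv.is_const_of_fderivWithin_eq_zero (𝕜 := ℝ)
    (fun u hu => (hg u hu).differentiableAt.differentiableWithinAt) (fun u hu => ?_) hx hy
  rw [fderivWithin_of_isOpen hIo hu, (hg u hu).hasFDerivAt.fderiv]
  ext; simp

theorem meridian_ode_Mb_case_i
    (I : Set ℝ) (hIo : IsOpen I) (hIc : IsPreconnected I)
    (f : ℝ → ℝ) (hf : ContDiffOn ℝ (⊤ : ℕ∞) f I)
    (hfpos : ∀ u ∈ I, 0 < f u)
 :
    (∀ u ∈ I, f u * deriv (deriv f) u + (deriv f u) ^ 2 - 1 = 0) ↔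
      ∃ a b, ∀ u ∈ I, (f u) ^ 2 = u ^ 2 + 2 * a * u + b := by
  have hf' : ContDiffOn ℝ (⊤ : ℕ∞) (deriv f) I := hf.deriv_of_isOpen hIo (by simp)
  have hfd : ∀ u ∈ I, DifferentiableAt ℝ f u := fun u hu =>
    (hf.contDiffAt (hIo.mem_nhds hu)).differentiableAt (by simp)
  have hfd' : ∀ u ∈ I, DifferentiableAt ℝ (deriv f) u := fun u hu =>
    (hf'.contDiffAt (hIo.mem_nhds hu)).differentiableAt (by simp)
  constructor
  · intro hode
    rcases I.eq_empty_or_nonempty with h | ⟨u₀, hu₀⟩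
    · exact ⟨0, 0, by simp [h]⟩
    -- F = f f' - id has zero derivative
    set F : ℝ → ℝ := fun x => f x * deriv f x - x with hF
    have hFd : ∀ u ∈ I, HasDerivAt F 0 u := by
      intro u hu
      have h1 : HasDerivAt F
          (deriv f u * deriv f u + f u * deriv (deriv f) u - 1) u :=
        (((hfd u hu).hasDerivAt.mul (hfd' u hu).hasDerivAt)).sub (hasDerivAt_id u)
      have h2 := hode u hu
      convert h1 using 1
      nlinarith [h2]
    obtain ⟨c, hc⟩ : ∃ c, c = f u₀ * deriv f u₀ - u₀ := ⟨_, rfl⟩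
    have hFc : ∀ u ∈ I, f u * deriv f u = u + c := by
      intro u hu
      have := const_on_of_hasDerivAt_zero I hIo hIc F hFd hu hu₀
      simp only [hF] at this
      rw [hc]; linarith
    set G : ℝ → ℝ := fun x => (f x) ^ 2 - (x ^ 2 + 2 * c * x) with hG
    have hGd : ∀ u ∈ I, HasDerivAt G 0 u := by
      intro u hu
      have hsq : HasDerivAt (fun x => (f x) ^ 2) (2 * f u * deriv f u) u := by
        simpa [mul_comm, mul_assoc, mul_left_comm] using (hfd u hu).hasDerivAt.fun_pow 2
      have hq : HasDerivAt (fun x : ℝ => x ^ 2 + 2 * c * x) (2 * u + 2 * c) u := by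
        simpa [mul_comm] using
          (hasDerivAt_pow 2 u).fun_add ((hasDerivAt_id u).const_mul (2 * c))
      have h1 : HasDerivAt G (2 * f u * deriv f u - (2 * u + 2 * c)) u := hsq.sub hq
      have h0 : 2 * f u * deriv f u - (2 * u + 2 * c) = 0 := by
        have := hFc u hu; linarith
      rw [h0] at h1; exact h1
    obtain ⟨b, hb⟩ : ∃ b, b = G u₀ := ⟨_, rfl⟩
    refine ⟨c, b, fun u hu => ?_⟩
    have := const_on_of_hasDerivAt_zero I hIo hIc G hGd hu hu₀
    simp only [hG] at this
    have hb' : b = f u₀ ^ 2 - (u₀ ^ 2 + 2 * c * u₀) := hb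
    linarith
  · rintro ⟨a, b, hab⟩ u hu
    -- first derivative identity: f f' = u + a on I
    have key : ∀ v ∈ I, f v * deriv f v = v + a := by
      intro v hv
      have hev : (fun x => (f x) ^ 2) =ᶠ[nhds v] fun x => x ^ 2 + 2 * a * x + b :=
        Filter.eventuallyEq_of_mem (hIo.mem_nhds hv) fun x hx => hab x hx
      have h1 : HasDerivAt (fun x => (f x) ^ 2) (2 * v + 2 * a) v := by
        have hq : HasDerivAt (fun x : ℝ => x ^ 2 + 2 * a * x + b) (2 * v + 2 * a) v := by
          simpa [mul_comm] using
            (((hasDerivAt_pow 2 v).add ((hasDerivAt_id v).const_mul (2 * a))).add_const b)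
        exact hq.congr_of_eventuallyEq hev
      have h2 : HasDerivAt (fun x => (f x) ^ 2) (2 * f v * deriv f v) v := by
        simpa [mul_comm, mul_assoc, mul_left_comm] using (hfd v hv).hasDerivAt.fun_pow 2
      have := h1.unique h2
      linarith
    have hev : (fun x => f x * deriv f x) =ᶠ[nhds u] fun x => x + a :=
      Filter.eventuallyEq_of_mem (hIo.mem_nhds hu) fun x hx => key x hx
    have h1 : HasDerivAt (fun x => f x * deriv f x) 1 u := by
      have : HasDerivAt (fun x : ℝ => x + a) 1 u := (hasDerivAt_id u).add_const a
      exact this.congr_of_eventuallyEq hev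
    have h2 : HasDerivAt (fun x => f x * deriv f x)
        (deriv f u * deriv f u + f u * deriv (deriv f) u) u :=
      (hfd u hu).hasDerivAt.mul (hfd' u hu).hasDerivAt
    have := h1.unique h2
    nlinarith [this]
end
end

section
/- The pair (f,g) satisfies f f'' + f'² + 1 = 0 on I if and only if there exist real constants a, b, c such that −u² + 2au + b > 0 for all u ∈ I, f(u) = √(−u² + 2au + b) and g(u) = √(a² + b)·arcsin((u − a)/√(a² + b)) + c for all u ∈ I. -/
noncomputable section

open Real

lemma aux_const_of_deriv_zero {s : Set ℝ} (hso : IsOpen s) (hsc : IsPreconnected s) {F : ℝ → ℝ}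
    (h : ∀ x ∈ s, HasDerivAt F 0 x) : ∀ x ∈ s, ∀ y ∈ s, F x = F y := by
  have hconv : Convex ℝ s := convex_iff_ordConnected.mpr hsc.ordConnected
  intro x hx y hy
  refine hconv.is_const_of_fderivWithin_eq_zero
    (fun z hz => ((h z hz).differentiableAt).differentiableWithinAt) (fun z hz => ?_) hx hy
  rw [fderivWithin_of_isOpen hso hz]
  have h0 : HasFDerivAt F (0 : ℝ →L[ℝ] ℝ) z := by
    refine (h z hz).hasFDerivAt.congr_fderiv ?_; ext; simp
  exact h0.fderiv

theorem meridian_curve_Ma_case_i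
    (I : Set ℝ) (hIo : IsOpen I) (hIc : IsPreconnected I)
    (f g : ℝ → ℝ) (hf : ContDiffOn ℝ (⊤ : ℕ∞) f I) (hg : ContDiffOn ℝ (⊤ : ℕ∞) g I)
    (hfpos : ∀ u ∈ I, 0 < f u)
    (hg' : ∀ u ∈ I, deriv g u = Real.sqrt ((deriv f u) ^ 2 + 1))
 :
    (∀ u ∈ I, f u * deriv (deriv f) u + (deriv f u) ^ 2 + 1 = 0) ↔
      ∃ a b c, (∀ u ∈ I, 0 < -u ^ 2 + 2 * a * u + b) ∧
        (∀ u ∈ I, f u = Real.sqrt (-u ^ 2 + 2 * a * u + b)) ∧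
        (∀ u ∈ I, g u =
          Real.sqrt (a ^ 2 + b) * Real.arcsin ((u - a) / Real.sqrt (a ^ 2 + b)) + c) := by
  constructor
  · intro hODE
    rcases Set.eq_empty_or_nonempty I with hI | ⟨u₀, hu₀⟩
    · exact ⟨0, 1, 0, by simp [hI], by simp [hI], by simp [hI]⟩
    -- differentiability facts
    have hfd : ∀ u ∈ I, HasDerivAt f (deriv f u) u := fun u hu =>
      ((hf.differentiableOn (by simp)).differentiableAt (hIo.mem_nhds hu)).hasDerivAt
    have hf1 : ContDiffOn ℝ (⊤ : ℕ∞) (deriv f) I := hf.deriv_of_isOpen hIo (by simp)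
    have hfd2 : ∀ u ∈ I, HasDerivAt (deriv f) (deriv (deriv f) u) u := fun u hu =>
      ((hf1.differentiableOn (by simp)).differentiableAt (hIo.mem_nhds hu)).hasDerivAt
    have hgd : ∀ u ∈ I, HasDerivAt g (deriv g u) u := fun u hu =>
      ((hg.differentiableOn (by simp)).differentiableAt (hIo.mem_nhds hu)).hasDerivAt
    -- step 1 : f * f' + u is constant
    have hF : ∀ x ∈ I, HasDerivAt (fun u => f u * deriv f u + u) 0 x := by
      intro x hx
      have h := ((hfd x hx).mul (hfd2 x hx)).add (hasDerivAt_id x)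
      refine h.congr_deriv ?_
      have := hODE x hx
      nlinarith [this]
    set a : ℝ := (f u₀ * deriv f u₀ + u₀) with ha
    have hFa : ∀ u ∈ I, f u * deriv f u = a - u := by
      intro u hu
      have := aux_const_of_deriv_zero hIo hIc hF u hu u₀ hu₀
      linarith
    -- step 2 : f^2 + u^2 - 2au is constant
    have hG : ∀ x ∈ I, HasDerivAt (fun u => f u ^ 2 + u ^ 2 - 2 * a * u) 0 x := by
      intro x hx
      have h := (((hfd x hx).pow 2).add ((hasDerivAt_id x).pow 2)).sub
        ((hasDerivAt_id x).const_mul (2 * a))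
      refine h.congr_deriv ?_
      have := hFa x hx
      simp only [id_eq, pow_one]
      push_cast
      nlinarith [this]
    set b : ℝ := (f u₀ ^ 2 + u₀ ^ 2 - 2 * a * u₀) with hb
    have hsq : ∀ u ∈ I, f u ^ 2 = -u ^ 2 + 2 * a * u + b := by
      intro u hu
      have := aux_const_of_deriv_zero hIo hIc hG u hu u₀ hu₀
      linarith
    have hqpos : ∀ u ∈ I, 0 < -u ^ 2 + 2 * a * u + b := by
      intro u hu
      have := hsq u hu
      nlinarith [hfpos u hu]
    have hfeq : ∀ u ∈ I, f u = Real.sqrt (-u ^ 2 + 2 * a * u + b) := by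
      intro u hu
      rw [← hsq u hu, Real.sqrt_sq (hfpos u hu).le]
    -- a^2 + b > 0
    have hab : 0 < a ^ 2 + b := by
      have h1 := hqpos u₀ hu₀
      nlinarith [sq_nonneg (a - u₀)]
    set s : ℝ := Real.sqrt (a ^ 2 + b) with hs
    have hspos : 0 < s := Real.sqrt_pos.mpr hab
    have hs2 : s ^ 2 = a ^ 2 + b := Real.sq_sqrt hab.le
    -- deriv f u = (a - u) / f u, and g' = s / f u
    have hg'' : ∀ u ∈ I, deriv g u = s / f u := by
      intro u hu
      have hfu := hfpos u hu
      have hdf : deriv f u = (a - u) / f u := by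
        field_simp
        linarith [hFa u hu]
      rw [hg' u hu, hdf]
      have key : ((a - u) / f u) ^ 2 + 1 = (a ^ 2 + b) / f u ^ 2 := by
        have h2 := hsq u hu
        field_simp
        nlinarith
      rw [key, Real.sqrt_div hab.le, Real.sqrt_sq hfu.le, hs]
    -- step 3 : g - s * arcsin((u-a)/s) is constant
    have hlt : ∀ u ∈ I, (u - a) ^ 2 < a ^ 2 + b := by
      intro u hu
      have := hqpos u hu
      nlinarith
    have hH : ∀ x ∈ I, HasDerivAt (fun u => g u - s * Real.arcsin ((u - a) / s)) 0 x := by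
      intro x hx
      have hxlt : ((x - a) / s) ^ 2 < 1 := by
        rw [div_pow, div_lt_one (by positivity)]
        rw [hs2]; exact hlt x hx
      have hne1 : (x - a) / s ≠ -1 := by intro h; rw [h] at hxlt; norm_num at hxlt
      have hne2 : (x - a) / s ≠ 1 := by intro h; rw [h] at hxlt; norm_num at hxlt
      have hinner : HasDerivAt (fun u : ℝ => (u - a) / s) (1 / s) x := by
        simpa using ((hasDerivAt_id x).sub_const a).div_const s
      have harc := (Real.hasDerivAt_arcsin hne1 hne2).comp x hinner
      have htot := (hgd x hx).sub (harc.const_mul s)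
      refine htot.congr_deriv ?_
      have hfx := hfpos x hx
      have h1x : Real.sqrt (1 - ((x - a) / s) ^ 2) = f x / s := by
        have : 1 - ((x - a) / s) ^ 2 = (-x ^ 2 + 2 * a * x + b) / s ^ 2 := by
          field_simp
          rw [hs2]; ring
        rw [this, Real.sqrt_div (hqpos x hx).le, ← hfeq x hx, Real.sqrt_sq hspos.le]
      rw [hg'' x hx, h1x]
      field_simp
      ring
    set c : ℝ := g u₀ - s * Real.arcsin ((u₀ - a) / s) with hc
    refine ⟨a, b, c, hqpos, hfeq, fun u hu => ?_⟩
    have := aux_const_of_deriv_zero hIo hIc hH u hu u₀ hu₀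
    linarith
  · rintro ⟨a, b, c, hqpos, hfeq, hgeq⟩
    intro u hu
    have key : ∀ v ∈ I, HasDerivAt f ((2 * a - 2 * v) / (2 * Real.sqrt (-v ^ 2 + 2 * a * v + b))) v := by
      intro v hv
      have h1 : HasDerivAt (fun w : ℝ => -w ^ 2 + 2 * a * w + b) (2 * a - 2 * v) v := by
        have h := hasDerivAt_id v
        have := (((h.pow 2).neg).add (h.const_mul (2 * a))).add_const b
        refine this.congr_deriv ?_
        simp only [id_eq]; push_cast; ring
      have hsq := h1.sqrt (hqpos v hv).ne'
      exact hsq.congr_of_eventuallyEq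
        (Filter.eventuallyEq_of_mem (hIo.mem_nhds hv) (fun w hw => hfeq w hw))
    have hdf : ∀ v ∈ I, deriv f v = (2 * a - 2 * v) / (2 * Real.sqrt (-v ^ 2 + 2 * a * v + b)) :=
      fun v hv => (key v hv).deriv
    set S : ℝ := Real.sqrt (-u ^ 2 + 2 * a * u + b) with hS
    have hSpos : 0 < S := Real.sqrt_pos.mpr (hqpos u hu)
    have hS2 : S ^ 2 = -u ^ 2 + 2 * a * u + b := Real.sq_sqrt (hqpos u hu).le
    -- second derivative
    have hN : HasDerivAt (fun v : ℝ => 2 * a - 2 * v) (-2) u := by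
      simpa using ((hasDerivAt_id u).const_mul (2 : ℝ)).const_sub (2 * a)
    have hq1 : HasDerivAt (fun w : ℝ => -w ^ 2 + 2 * a * w + b) (2 * a - 2 * u) u := by
      have h := hasDerivAt_id u
      have := (((h.pow 2).neg).add (h.const_mul (2 * a))).add_const b
      refine this.congr_deriv ?_
      simp only [id_eq]; push_cast; ring
    have hD : HasDerivAt (fun v : ℝ => 2 * Real.sqrt (-v ^ 2 + 2 * a * v + b))
        (2 * ((2 * a - 2 * u) / (2 * S))) u := (hq1.sqrt (hqpos u hu).ne').const_mul 2
    have hDiv := hN.div hD (by positivity)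
    have hded : deriv (deriv f) u = deriv
        (fun v => (2 * a - 2 * v) / (2 * Real.sqrt (-v ^ 2 + 2 * a * v + b))) u := by
      apply Filter.EventuallyEq.deriv_eq
      exact Filter.eventuallyEq_of_mem (hIo.mem_nhds hu) (fun w hw => hdf w hw)
    rw [hded, (show HasDerivAt (fun v : ℝ => (2 * a - 2 * v) / (2 * Real.sqrt (-v ^ 2 + 2 * a * v + b))) _ u from hDiv).deriv, hdf u hu, hfeq u hu, ← hS]
    field_simp
    ring
end
end

section
/- The pair (f,g) satisfies f f'' + f'² − 1 = 0 on I if and only if there exist real constants a, b, c such that u² + 2au + b > 0 for all u ∈ I, a² > b, f(u) = √(u² + 2au + b) and g(u) = √(a² − b)·ln(u + a + √(u² + 2au + b)) + c for all u ∈ I. -/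
noncomputable section

open Real

private lemma const_on (I : Set ℝ) (hIo : IsOpen I) (hIc : IsPreconnected I)
    (F : ℝ → ℝ) (hF : ∀ u ∈ I, HasDerivAt F 0 u) {x y : ℝ} (hx : x ∈ I) (hy : y ∈ I) :
    F x = F y := by
  have hconv : Convex ℝ I := hIc.ordConnected.convex
  refine hconv.is_const_of_fderivWithin_eq_zero
    (fun u hu => ((hF u hu).differentiableAt).differentiableWithinAt) (fun u hu => ?_) hx hy
  rw [fderivWithin_of_mem_nhds (hIo.mem_nhds hu), (hF u hu).hasFDerivAt.fderiv]
  ext; simp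

private lemma hasDerivAt_Q (a b u : ℝ) :
    HasDerivAt (fun v : ℝ => v ^ 2 + 2 * a * v + b) (2 * u + 2 * a) u := by
  have h1 := ((hasDerivAt_pow 2 u).add ((hasDerivAt_id' u).const_mul (2 * a))).add_const b
  refine h1.congr_deriv ?_; push_cast; ring

theorem meridian_curve_Mb_case_i
    (I : Set ℝ) (hIo : IsOpen I) (hIc : IsPreconnected I)
    (f g : ℝ → ℝ) (hf : ContDiffOn ℝ (⊤ : ℕ∞) f I) (hg : ContDiffOn ℝ (⊤ : ℕ∞) g I)
    (hfpos : ∀ u ∈ I, 0 < f u)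
    (hf'sq : ∀ u ∈ I, (deriv f u) ^ 2 > 1)
    (hg' : ∀ u ∈ I, deriv g u = Real.sqrt ((deriv f u) ^ 2 - 1))
 :
    (∀ u ∈ I, f u * deriv (deriv f) u + (deriv f u) ^ 2 - 1 = 0) ↔
      ∃ a b c, (∀ u ∈ I, 0 < u ^ 2 + 2 * a * u + b) ∧ a ^ 2 > b ∧
        (∀ u ∈ I, f u = Real.sqrt (u ^ 2 + 2 * a * u + b)) ∧
        (∀ u ∈ I, g u =
          Real.sqrt (a ^ 2 - b) * Real.log (u + a + Real.sqrt (u ^ 2 + 2 * a * u + b)) + c) := by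
  constructor
  · intro hODE
    rcases I.eq_empty_or_nonempty with rfl | ⟨u₀, hu₀⟩
    · exact ⟨1, 0, 0, by simp, by norm_num, by simp, by simp⟩
    have hfd : ∀ u ∈ I, DifferentiableAt ℝ f u := fun u hu =>
      (hf.contDiffAt (hIo.mem_nhds hu)).differentiableAt (by simp)
    have hf'cd : ContDiffOn ℝ (⊤ : ℕ∞) (deriv f) I := hf.deriv_of_isOpen hIo (by simp)
    have hf'd : ∀ u ∈ I, DifferentiableAt ℝ (deriv f) u := fun u hu =>
      (hf'cd.contDiffAt (hIo.mem_nhds hu)).differentiableAt (by simp)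
    have hgd : ∀ u ∈ I, DifferentiableAt ℝ g u := fun u hu =>
      (hg.contDiffAt (hIo.mem_nhds hu)).differentiableAt (by simp)
    set h : ℝ → ℝ := fun u => (f u) ^ 2 with hh
    have hder_h : ∀ u ∈ I, HasDerivAt h (2 * f u * deriv f u) u := by
      intro u hu
      have := ((hfd u hu).hasDerivAt).pow 2
      refine this.congr_deriv ?_; push_cast; ring
    have hderiv_h : ∀ u ∈ I, deriv h u = 2 * f u * deriv f u := fun u hu =>
      (hder_h u hu).deriv
    have h2 : ∀ u ∈ I, HasDerivAt (deriv h) 2 u := by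
      intro u hu
      have H : HasDerivAt (fun v => 2 * (f v * deriv f v)) 2 u := by
        have := (((hfd u hu).hasDerivAt).mul ((hf'd u hu).hasDerivAt)).const_mul 2
        refine this.congr_deriv ?_
        nlinarith [hODE u hu]
      exact H.congr_of_eventuallyEq
        (Filter.eventuallyEq_of_mem (hIo.mem_nhds hu) fun v hv => by
          rw [hderiv_h v hv, mul_assoc])
    set a : ℝ := (deriv h u₀ - 2 * u₀) / 2 with ha
    set b : ℝ := h u₀ - u₀ ^ 2 - 2 * a * u₀ with hb
    have claim1 : ∀ u ∈ I, deriv h u = 2 * u + 2 * a := by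
      intro u hu
      have hF : ∀ v ∈ I, HasDerivAt (fun w => deriv h w - 2 * w) 0 v := by
        intro v hv
        have := (h2 v hv).sub ((hasDerivAt_id v).const_mul 2)
        refine this.congr_deriv ?_; ring
      have := const_on I hIo hIc _ hF hu hu₀
      simp only [ha] at this ⊢
      linarith [this]
    have claim2 : ∀ u ∈ I, h u = u ^ 2 + 2 * a * u + b := by
      intro u hu
      have hF : ∀ v ∈ I, HasDerivAt (fun w => h w - (w ^ 2 + 2 * a * w)) 0 v := by
        intro v hv
        have H1 : HasDerivAt h (2 * v + 2 * a) v := by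
          have := hder_h v hv
          rwa [show 2 * f v * deriv f v = 2 * v + 2 * a from
            (hderiv_h v hv).symm.trans (claim1 v hv)] at this
        have := H1.sub (hasDerivAt_Q a 0 v)
        simp only [add_zero] at this
        refine this.congr_deriv ?_; ring
      have := const_on I hIo hIc _ hF hu hu₀
      simp only [hb] at this ⊢
      linarith [this]
    have Qpos : ∀ u ∈ I, 0 < u ^ 2 + 2 * a * u + b := by
      intro u hu
      have := claim2 u hu
      have := pow_pos (hfpos u hu) 2
      simp only [hh] at *; linarith
    have hfeq : ∀ u ∈ I, f u = Real.sqrt (u ^ 2 + 2 * a * u + b) := by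
      intro u hu
      rw [← claim2 u hu]
      exact (Real.sqrt_sq (hfpos u hu).le).symm
    have hf'eq : ∀ u ∈ I, deriv f u = (u + a) / f u := by
      intro u hu
      have h1 := (hderiv_h u hu).symm.trans (claim1 u hu)
      have h2 := (hfpos u hu).ne'
      field_simp
      linarith
    have hab : a ^ 2 > b := by
      have h1 := hf'sq u₀ hu₀
      rw [hf'eq u₀ hu₀] at h1
      have h2 := hfpos u₀ hu₀
      have h3 := claim2 u₀ hu₀
      rw [div_pow, gt_iff_lt, lt_div_iff₀ (by positivity)] at h1
      simp only [hh] at h3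
      nlinarith
    -- the g part
    have hinner_ne : ∀ u ∈ I, u + a + Real.sqrt (u ^ 2 + 2 * a * u + b) ≠ 0 := by
      intro u hu
      have hQ := Qpos u hu
      have hs : Real.sqrt (u ^ 2 + 2 * a * u + b) ^ 2 = u ^ 2 + 2 * a * u + b :=
        Real.sq_sqrt hQ.le
      have hs0 : 0 < Real.sqrt (u ^ 2 + 2 * a * u + b) := Real.sqrt_pos.mpr hQ
      intro hcon
      nlinarith
    have hG : ∀ u ∈ I, HasDerivAt
        (fun v => Real.sqrt (a ^ 2 - b) *
          Real.log (v + a + Real.sqrt (v ^ 2 + 2 * a * v + b)))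
        (Real.sqrt (a ^ 2 - b) / Real.sqrt (u ^ 2 + 2 * a * u + b)) u := by
      intro u hu
      have hQ := Qpos u hu
      have hs0 : 0 < Real.sqrt (u ^ 2 + 2 * a * u + b) := Real.sqrt_pos.mpr hQ
      have hsq : HasDerivAt (fun v => Real.sqrt (v ^ 2 + 2 * a * v + b))
          ((2 * u + 2 * a) / (2 * Real.sqrt (u ^ 2 + 2 * a * u + b))) u :=
        (hasDerivAt_Q a b u).sqrt hQ.ne'
      have hin : HasDerivAt (fun v => v + a + Real.sqrt (v ^ 2 + 2 * a * v + b))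
          (1 + (2 * u + 2 * a) / (2 * Real.sqrt (u ^ 2 + 2 * a * u + b))) u :=
        ((hasDerivAt_id u).add_const a).add hsq
      have hlog := (hin.log (hinner_ne u hu)).const_mul (Real.sqrt (a ^ 2 - b))
      refine hlog.congr_deriv ?_
      have hne := hinner_ne u hu
      generalize Real.sqrt (u ^ 2 + 2 * a * u + b) = s at hs0 hne ⊢
      have hs1 := hs0.ne'
      field_simp
      ring
    set c : ℝ := g u₀ - Real.sqrt (a ^ 2 - b) *
      Real.log (u₀ + a + Real.sqrt (u₀ ^ 2 + 2 * a * u₀ + b)) with hc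
    refine ⟨a, b, c, Qpos, hab, hfeq, ?_⟩
    intro u hu
    have hgd' : ∀ v ∈ I, deriv g v =
        Real.sqrt (a ^ 2 - b) / Real.sqrt (v ^ 2 + 2 * a * v + b) := by
      intro v hv
      rw [hg' v hv, hf'eq v hv]
      have hQ := Qpos v hv
      have hfv := hfpos v hv
      have h3 := claim2 v hv
      simp only [hh] at h3
      have : ((v + a) / f v) ^ 2 - 1 = (a ^ 2 - b) / (v ^ 2 + 2 * a * v + b) := by
        rw [div_pow, ← h3]
        field_simp
        nlinarith
      rw [this, Real.sqrt_div (by linarith) _]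
    have hF : ∀ v ∈ I, HasDerivAt (fun w => g w -
        Real.sqrt (a ^ 2 - b) *
          Real.log (w + a + Real.sqrt (w ^ 2 + 2 * a * w + b))) 0 v := by
      intro v hv
      have := ((hgd v hv).hasDerivAt).sub (hG v hv)
      rwa [hgd' v hv, sub_self] at this
    have := const_on I hIo hIc _ hF hu hu₀
    simp only [hc]
    linarith [this]
  · rintro ⟨a, b, c, hQ, hab, hfeq, hgeq⟩ u hu
    have hfs : ∀ v ∈ I, HasDerivAt f
        ((v + a) / Real.sqrt (v ^ 2 + 2 * a * v + b)) v := by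
      intro v hv
      have hsq : HasDerivAt (fun w => Real.sqrt (w ^ 2 + 2 * a * w + b))
          ((2 * v + 2 * a) / (2 * Real.sqrt (v ^ 2 + 2 * a * v + b))) v :=
        (hasDerivAt_Q a b v).sqrt (hQ v hv).ne'
      have heq : f =ᶠ[nhds v] fun w => Real.sqrt (w ^ 2 + 2 * a * w + b) :=
        Filter.eventuallyEq_of_mem (hIo.mem_nhds hv) fun w hw => hfeq w hw
      have := hsq.congr_of_eventuallyEq heq
      refine this.congr_deriv ?_
      have hs0 : (0:ℝ) < Real.sqrt (v ^ 2 + 2 * a * v + b) := Real.sqrt_pos.mpr (hQ v hv)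
      field_simp
    have hf'eq : ∀ v ∈ I, deriv f v = (v + a) / Real.sqrt (v ^ 2 + 2 * a * v + b) :=
      fun v hv => (hfs v hv).deriv
    have hs0 : (0:ℝ) < Real.sqrt (u ^ 2 + 2 * a * u + b) := Real.sqrt_pos.mpr (hQ u hu)
    set s : ℝ := Real.sqrt (u ^ 2 + 2 * a * u + b) with hs
    have hssq : s ^ 2 = u ^ 2 + 2 * a * u + b := Real.sq_sqrt (hQ u hu).le
    have hD : HasDerivAt (fun v => (v + a) / Real.sqrt (v ^ 2 + 2 * a * v + b))
        ((1 * s - (u + a) * ((2 * u + 2 * a) / (2 * s))) / s ^ 2) u := by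
      exact ((hasDerivAt_id u).add_const a).div
        ((hasDerivAt_Q a b u).sqrt (hQ u hu).ne') hs0.ne'
    have hD2 : HasDerivAt (deriv f)
        ((1 * s - (u + a) * ((2 * u + 2 * a) / (2 * s))) / s ^ 2) u :=
      hD.congr_of_eventuallyEq
        (Filter.eventuallyEq_of_mem (hIo.mem_nhds hu) fun v hv => hf'eq v hv)
    rw [hD2.deriv, hf'eq u hu, hfeq u hu, ← hs]
    field_simp
    ring
end
end

section
/- The pair (f,g) satisfies f f'' + f'² − 1 = 0 on I if and only if there exist real constants a, b, c such that u² + 2au + b > 0 for all u ∈ I, b > a², f(u) = √(u² + 2au + b) and g(u) = √(b − a²)·ln(u + a + √(u² + 2au + b)) + c for all u ∈ I. -/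
noncomputable section

open Real

/-- Constancy of a function with zero derivative on an open preconnected set. -/
lemma aux_const_of_deriv_zero_s13 {I : Set ℝ} (hIo : IsOpen I) (hIc : IsPreconnected I)
    {h : ℝ → ℝ} (hd : ∀ x ∈ I, HasDerivAt h 0 x) {x y : ℝ} (hx : x ∈ I) (hy : y ∈ I) :
    h x = h y := by
  have hconv : Convex ℝ I := convex_iff_ordConnected.mpr hIc.ordConnected
  refine hconv.is_const_of_fderivWithin_eq_zero
    (fun z hz => ((hd z hz).differentiableAt).differentiableWithinAt) (fun z hz => ?_) hx hy
  rw [fderivWithin_of_isOpen hIo hz, (hd z hz).hasFDerivAt.fderiv]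
  ext
  simp

lemma aux_q_deriv (a b u : ℝ) :
    HasDerivAt (fun u : ℝ => u ^ 2 + 2 * a * u + b) (2 * u + 2 * a) u := by
  have h1 : HasDerivAt (fun u : ℝ => u ^ 2) (2 * u) u := by
    simpa using hasDerivAt_pow 2 u
  have h2 : HasDerivAt (fun u : ℝ => 2 * a * u) (2 * a) u := by
    simpa using (hasDerivAt_id u).const_mul (2 * a)
  simpa using (h1.add h2).add_const b

lemma aux_sqrt_deriv (a b u : ℝ) (h : 0 < u ^ 2 + 2 * a * u + b) :
    HasDerivAt (fun u : ℝ => Real.sqrt (u ^ 2 + 2 * a * u + b))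
      ((u + a) / Real.sqrt (u ^ 2 + 2 * a * u + b)) u := by
  have hs : Real.sqrt (u ^ 2 + 2 * a * u + b) ≠ 0 := by positivity
  have := (aux_q_deriv a b u).sqrt (ne_of_gt h)
  convert this using 1
  field_simp

lemma aux_phi_deriv (a b u : ℝ) (h : 0 < u ^ 2 + 2 * a * u + b) :
    HasDerivAt (fun u : ℝ => (u + a) / Real.sqrt (u ^ 2 + 2 * a * u + b))
      ((b - a ^ 2) / ((u ^ 2 + 2 * a * u + b) * Real.sqrt (u ^ 2 + 2 * a * u + b))) u := by
  have hs : (0:ℝ) < Real.sqrt (u ^ 2 + 2 * a * u + b) := Real.sqrt_pos.mpr h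
  have hnum : HasDerivAt (fun u : ℝ => u + a) 1 u := (hasDerivAt_id u).add_const a
  have := hnum.div (aux_sqrt_deriv a b u h) (ne_of_gt hs)
  refine this.congr_deriv ?_
  have hsq : Real.sqrt (u ^ 2 + 2 * a * u + b) ^ 2 = u ^ 2 + 2 * a * u + b :=
    Real.sq_sqrt h.le
  generalize Real.sqrt (u ^ 2 + 2 * a * u + b) = S at hsq hs ⊢
  rw [← hsq]
  field_simp
  linarith [hsq]

lemma aux_pos_sum (a b u : ℝ) (hb : b > a ^ 2) :
    0 < u + a + Real.sqrt (u ^ 2 + 2 * a * u + b) := by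
  have hq : 0 < u ^ 2 + 2 * a * u + b := by nlinarith [sq_nonneg (u + a)]
  have h1 : Real.sqrt ((u + a) ^ 2) < Real.sqrt (u ^ 2 + 2 * a * u + b) := by
    apply Real.sqrt_lt_sqrt (sq_nonneg _)
    nlinarith
  rw [Real.sqrt_sq_eq_abs] at h1
  have := neg_abs_le (u + a)
  linarith

lemma aux_log_deriv (a b u : ℝ) (hb : b > a ^ 2) :
    HasDerivAt (fun u : ℝ => Real.log (u + a + Real.sqrt (u ^ 2 + 2 * a * u + b)))
      (1 / Real.sqrt (u ^ 2 + 2 * a * u + b)) u := by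
  have hq : 0 < u ^ 2 + 2 * a * u + b := by nlinarith [sq_nonneg (u + a)]
  have hs : (0:ℝ) < Real.sqrt (u ^ 2 + 2 * a * u + b) := Real.sqrt_pos.mpr hq
  have hpos := aux_pos_sum a b u hb
  have hin : HasDerivAt (fun u : ℝ => u + a + Real.sqrt (u ^ 2 + 2 * a * u + b))
      (1 + (u + a) / Real.sqrt (u ^ 2 + 2 * a * u + b)) u :=
    ((hasDerivAt_id u).add_const a).add (aux_sqrt_deriv a b u hq)
  have := hin.log (ne_of_gt hpos)
  convert this using 1
  have hsq : Real.sqrt (u ^ 2 + 2 * a * u + b) ^ 2 = u ^ 2 + 2 * a * u + b :=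
    Real.sq_sqrt hq.le
  generalize Real.sqrt (u ^ 2 + 2 * a * u + b) = S at hsq hs hpos ⊢
  field_simp
  ring

theorem meridian_curve_Mpp_case_i
    (I : Set ℝ) (hIo : IsOpen I) (hIc : IsPreconnected I)
    (f g : ℝ → ℝ) (hf : ContDiffOn ℝ (⊤ : ℕ∞) f I) (hg : ContDiffOn ℝ (⊤ : ℕ∞) g I)
    (hfpos : ∀ u ∈ I, 0 < f u)
    (hf'sq : ∀ u ∈ I, (deriv f u) ^ 2 < 1)
    (hg' : ∀ u ∈ I, deriv g u = Real.sqrt (1 - (deriv f u) ^ 2))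
 :
    (∀ u ∈ I, f u * deriv (deriv f) u + (deriv f u) ^ 2 - 1 = 0) ↔
      ∃ a b c, (∀ u ∈ I, 0 < u ^ 2 + 2 * a * u + b) ∧ b > a ^ 2 ∧
        (∀ u ∈ I, f u = Real.sqrt (u ^ 2 + 2 * a * u + b)) ∧
        (∀ u ∈ I, g u =
          Real.sqrt (b - a ^ 2) * Real.log (u + a + Real.sqrt (u ^ 2 + 2 * a * u + b)) + c) := by
  constructor
  · intro hode
    rcases I.eq_empty_or_nonempty with hI | ⟨u₀, hu₀⟩
    · exact ⟨0, 1, 0, by simp [hI], by norm_num, by simp [hI], by simp [hI]⟩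
    -- basic differentiability facts
    have hfd : ∀ u ∈ I, HasDerivAt f (deriv f u) u := fun u hu =>
      ((hf.contDiffAt (hIo.mem_nhds hu)).differentiableAt (by simp)).hasDerivAt
    have hf' : ContDiffOn ℝ (⊤ : ℕ∞) (deriv f) I := hf.deriv_of_isOpen hIo (by simp)
    have hfd2 : ∀ u ∈ I, HasDerivAt (deriv f) (deriv (deriv f) u) u := fun u hu =>
      ((hf'.contDiffAt (hIo.mem_nhds hu)).differentiableAt (by simp)).hasDerivAt
    have hgd : ∀ u ∈ I, HasDerivAt g (deriv g u) u := fun u hu =>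
      ((hg.contDiffAt (hIo.mem_nhds hu)).differentiableAt (by simp)).hasDerivAt
    -- step 1 : 2 f f' - 2 u is constant on I
    have hstep1 : ∀ u ∈ I, f u * deriv f u - u = f u₀ * deriv f u₀ - u₀ := by
      intro u hu
      refine aux_const_of_deriv_zero_s13 hIo hIc (h := fun u => f u * deriv f u - u) ?_ hu hu₀
      intro x hx
      have hd : HasDerivAt (fun u => f u * deriv f u - u)
          (deriv f x * deriv f x + f x * deriv (deriv f) x - 1) x :=
        ((hfd x hx).mul (hfd2 x hx)).sub (hasDerivAt_id x)
      have h0 := hode x hx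
      convert hd using 1
      nlinarith [h0]
    set a : ℝ := f u₀ * deriv f u₀ - u₀ with ha
    have hffa : ∀ u ∈ I, f u * deriv f u = u + a := by
      intro u hu
      have := hstep1 u hu
      linarith
    -- step 2 : f u ^ 2 - u ^ 2 - 2 a u is constant
    set b : ℝ := f u₀ ^ 2 - u₀ ^ 2 - 2 * a * u₀ with hbdef
    have hstep2 : ∀ u ∈ I, f u ^ 2 = u ^ 2 + 2 * a * u + b := by
      intro u hu
      have : f u ^ 2 - u ^ 2 - 2 * a * u = f u₀ ^ 2 - u₀ ^ 2 - 2 * a * u₀ := by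
        refine aux_const_of_deriv_zero_s13 hIo hIc
          (h := fun u => f u ^ 2 - u ^ 2 - 2 * a * u) ?_ hu hu₀
        intro x hx
        have hd : HasDerivAt (fun u => f u ^ 2 - u ^ 2 - 2 * a * u)
            (2 * f x * deriv f x - 2 * x - 2 * a) x := by
          have h1 : HasDerivAt (fun u => f u ^ 2) (2 * f x * deriv f x) x := by
            have := (hfd x hx).mul (hfd x hx)
            refine (this.congr_deriv (by ring)).congr_of_eventuallyEq
              (Filter.Eventually.of_forall fun t => ?_)
            show f t ^ 2 = f t * f t
            ring
          have h2 : HasDerivAt (fun u : ℝ => u ^ 2) (2 * x) x := by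
            simpa using hasDerivAt_pow 2 x
          have h3 : HasDerivAt (fun u : ℝ => 2 * a * u) (2 * a) x := by
            simpa using (hasDerivAt_id x).const_mul (2 * a)
          exact (h1.sub h2).sub h3
        have := hffa x hx
        convert hd using 1
        linarith
      nlinarith [this]
    -- positivity of the quadratic
    have hqpos : ∀ u ∈ I, 0 < u ^ 2 + 2 * a * u + b := by
      intro u hu
      have := hstep2 u hu
      nlinarith [hfpos u hu]
    -- b > a ^ 2
    have hba : b > a ^ 2 := by
      have h1 := hffa u₀ hu₀
      have h2 := hstep2 u₀ hu₀
      have h3 := hf'sq u₀ hu₀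
      have h4 := hfpos u₀ hu₀
      have h5 : f u₀ ^ 2 * deriv f u₀ ^ 2 = (u₀ + a) ^ 2 := by
        have : (f u₀ * deriv f u₀) ^ 2 = (u₀ + a) ^ 2 := by rw [h1]
        nlinarith [this]
      have key : (u₀ + a) ^ 2 < f u₀ ^ 2 := by
        rw [← h5]
        nlinarith [pow_pos h4 2]
      nlinarith [key, h2]
    -- f formula
    have hfe : ∀ u ∈ I, f u = Real.sqrt (u ^ 2 + 2 * a * u + b) := by
      intro u hu
      rw [← hstep2 u hu, Real.sqrt_sq (hfpos u hu).le]
    -- deriv g value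
    have hg'val : ∀ u ∈ I, deriv g u = Real.sqrt (b - a ^ 2) / f u := by
      intro u hu
      rw [hg' u hu]
      have h4 := hfpos u hu
      have h2 := hstep2 u hu
      have h3 := hffa u hu
      have h5 : f u ^ 2 * deriv f u ^ 2 = (u + a) ^ 2 := by
        have : (f u * deriv f u) ^ 2 = (u + a) ^ 2 := by rw [h3]
        nlinarith [this]
      have h1 : 1 - (deriv f u) ^ 2 = (b - a ^ 2) / f u ^ 2 := by
        rw [eq_div_iff (by positivity)]
        nlinarith [h5, h2]
      rw [h1, Real.sqrt_div (by linarith [hba] : (0:ℝ) ≤ b - a ^ 2),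
        Real.sqrt_sq h4.le]
    -- g formula
    set c : ℝ := g u₀ -
      Real.sqrt (b - a ^ 2) * Real.log (u₀ + a + Real.sqrt (u₀ ^ 2 + 2 * a * u₀ + b)) with hc
    refine ⟨a, b, c, hqpos, hba, hfe, ?_⟩
    intro u hu
    have hconst : ∀ u ∈ I,
        g u - Real.sqrt (b - a ^ 2) * Real.log (u + a + Real.sqrt (u ^ 2 + 2 * a * u + b)) =
        g u₀ - Real.sqrt (b - a ^ 2) * Real.log (u₀ + a + Real.sqrt (u₀ ^ 2 + 2 * a * u₀ + b)) := by
      intro u hu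
      refine aux_const_of_deriv_zero_s13 hIo hIc
        (h := fun u => g u -
          Real.sqrt (b - a ^ 2) * Real.log (u + a + Real.sqrt (u ^ 2 + 2 * a * u + b)))
        ?_ hu hu₀
      intro x hx
      have hd : HasDerivAt (fun u => g u -
          Real.sqrt (b - a ^ 2) * Real.log (u + a + Real.sqrt (u ^ 2 + 2 * a * u + b)))
          (deriv g x - Real.sqrt (b - a ^ 2) * (1 / Real.sqrt (x ^ 2 + 2 * a * x + b))) x :=
        (hgd x hx).sub ((aux_log_deriv a b x hba).const_mul _)
      have h1 := hg'val x hx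
      have h2 := hfe x hx
      convert hd using 1
      rw [h1, h2]
      ring
    have := hconst u hu
    rw [hc]
    linarith
  · rintro ⟨a, b, c, hqpos, hba, hfe, hge⟩
    intro u hu
    have hq := hqpos u hu
    have hs : (0:ℝ) < Real.sqrt (u ^ 2 + 2 * a * u + b) := Real.sqrt_pos.mpr hq
    have hmem : I ∈ nhds u := hIo.mem_nhds hu
    -- deriv f on I
    have hdf : ∀ v ∈ I, deriv f v = (v + a) / Real.sqrt (v ^ 2 + 2 * a * v + b) := by
      intro v hv
      have hev : f =ᶠ[nhds v] fun w => Real.sqrt (w ^ 2 + 2 * a * w + b) := by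
        filter_upwards [hIo.mem_nhds hv] with w hw using hfe w hw
      rw [Filter.EventuallyEq.deriv_eq hev]
      exact (aux_sqrt_deriv a b v (hqpos v hv)).deriv
    have hdf2 : deriv (deriv f) u =
        (b - a ^ 2) / ((u ^ 2 + 2 * a * u + b) * Real.sqrt (u ^ 2 + 2 * a * u + b)) := by
      have hev : deriv f =ᶠ[nhds u] fun w => (w + a) / Real.sqrt (w ^ 2 + 2 * a * w + b) := by
        filter_upwards [hmem] with w hw using hdf w hw
      rw [Filter.EventuallyEq.deriv_eq hev]
      exact (aux_phi_deriv a b u hq).deriv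
    rw [hfe u hu, hdf u hu, hdf2]
    have hsq : Real.sqrt (u ^ 2 + 2 * a * u + b) ^ 2 = u ^ 2 + 2 * a * u + b :=
      Real.sq_sqrt hq.le
    generalize Real.sqrt (u ^ 2 + 2 * a * u + b) = S at hsq hs ⊢
    rw [← hsq]
    field_simp
    linarith [hsq]
end
end

section
/- Let c be a real constant. Then f satisfies the differential equation f f'' + f'² + 1 = c √(f'² + 1) on I if and only if there exists a constant a such that f(u)·√(f'(u)² + 1) = c f(u) + a for all u ∈ I. -/
noncomputable section

open Real

theorem meridian_ode_Ma_case_ii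
    (I : Set ℝ) (hIo : IsOpen I) (hIc : IsPreconnected I)
    (f : ℝ → ℝ) (hf : ContDiffOn ℝ (⊤ : ℕ∞) f I)
    (hfpos : ∀ u ∈ I, 0 < f u)
    (hf' : ∀ u ∈ I, deriv f u ≠ 0)
    (c : ℝ) :
    (∀ u ∈ I, f u * deriv (deriv f) u + (deriv f u) ^ 2 + 1 = c * Real.sqrt ((deriv f u) ^ 2 + 1)) ↔
      ∃ a, ∀ u ∈ I, f u * Real.sqrt ((deriv f u) ^ 2 + 1) = c * f u + a := by
  have hsq : ∀ u : ℝ, (0:ℝ) < (deriv f u)^2 + 1 := fun u => by positivity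
  have hspos : ∀ u : ℝ, 0 < Real.sqrt ((deriv f u)^2 + 1) :=
    fun u => Real.sqrt_pos.2 (hsq u)
  set g : ℝ → ℝ := fun x => f x * Real.sqrt ((deriv f x)^2 + 1) - c * f x with hg
  have hfd : ContDiffOn ℝ (⊤ : ℕ∞) (deriv f) I := hf.deriv_of_isOpen hIo (by simp)
  have key : ∀ u ∈ I, HasDerivAt g
      (deriv f u / Real.sqrt ((deriv f u)^2 + 1) *
        (f u * deriv (deriv f) u + (deriv f u)^2 + 1
          - c * Real.sqrt ((deriv f u)^2 + 1))) u := by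
    intro u hu
    have h1 : HasDerivAt f (deriv f u) u :=
      (((hf.differentiableOn (by simp)).differentiableAt (hIo.mem_nhds hu))).hasDerivAt
    have h2 : HasDerivAt (deriv f) (deriv (deriv f) u) u :=
      (((hfd.differentiableOn (by simp)).differentiableAt (hIo.mem_nhds hu))).hasDerivAt
    have h3 : HasDerivAt (fun x => (deriv f x)^2 + 1)
        (2 * deriv f u * deriv (deriv f) u) u := by
      have := (h2.pow 2).add_const 1
      simpa [mul_comm, mul_assoc, mul_left_comm] using this
    have h4 : HasDerivAt (fun x => Real.sqrt ((deriv f x)^2 + 1))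
        (deriv f u * deriv (deriv f) u / Real.sqrt ((deriv f u)^2 + 1)) u := by
      have := (Real.hasDerivAt_sqrt (ne_of_gt (hsq u))).comp u h3
      refine this.congr_deriv ?_
      field_simp
    have h5 := (h1.mul h4).sub (h1.const_mul c)
    refine h5.congr_deriv ?_
    have hS : Real.sqrt ((deriv f u)^2 + 1) ^ 2
        = (deriv f u)^2 + 1 := Real.sq_sqrt ((hsq u).le)
    field_simp
    linear_combination (deriv f u) * hS
  constructor
  · intro hode
    rcases Set.eq_empty_or_nonempty I with hI | ⟨u0, hu0⟩
    · exact ⟨0, by simp [hI]⟩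
    · refine ⟨g u0, fun u hu => ?_⟩
      have hzero : ∀ x ∈ I, fderivWithin ℝ g I x = 0 := by
        intro x hx
        have h0 : HasDerivAt g 0 x := by
          have := key x hx
          have heq : f x * deriv (deriv f) x + (deriv f x)^2 + 1
              - c * Real.sqrt ((deriv f x)^2 + 1) = 0 := by
            rw [hode x hx]; ring
          simpa [heq] using this
        have h0' : HasFDerivAt g (0 : ℝ →L[ℝ] ℝ) x := by
          have := h0.hasFDerivAt
          convert this using 1
          ext y
          simp
          ext y
          simp
        rw [fderivWithin_of_isOpen hIo hx]
        exact h0'.fderiv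
      have hdiff : DifferentiableOn ℝ g I := fun x hx =>
        ((key x hx).differentiableAt.differentiableWithinAt)
      have hconv : Convex ℝ I := hIc.ordConnected.convex
      have := hconv.is_const_of_fderivWithin_eq_zero hdiff hzero hu hu0
      have hgu : g u = g u0 := this
      have : f u * Real.sqrt ((deriv f u)^2 + 1) - c * f u = g u0 := hgu
      linarith [this]
  · rintro ⟨a, ha⟩ u hu
    have h0 : HasDerivAt g 0 u := by
      have hconst : ∀ᶠ x in nhds u, g x = a := by
        filter_upwards [hIo.mem_nhds hu] with x hx
        have := ha x hx
        simp only [hg]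
        linarith
      exact (hasDerivAt_const u a).congr_of_eventuallyEq hconst
    have huniq := (key u hu).unique h0
    have hne : deriv f u / Real.sqrt ((deriv f u)^2 + 1) ≠ 0 :=
      div_ne_zero (hf' u hu) (ne_of_gt (hspos u))
    have := (mul_eq_zero.1 huniq).resolve_left hne
    linarith [this]
end
end

section
/- Let c be a real constant. Then f satisfies the differential equation f f'' + f'² − 1 = c √(f'² − 1) on I if and only if there exists a constant a such that f(u)·√(f'(u)² − 1) = c f(u) + a for all u ∈ I. -/
noncomputable section

open Real

theorem meridian_ode_Mb_case_ii
    (I : Set ℝ) (hIo : IsOpen I) (hIc : IsPreconnected I)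
    (f : ℝ → ℝ) (hf : ContDiffOn ℝ (⊤ : ℕ∞) f I)
    (hfpos : ∀ u ∈ I, 0 < f u)
    (hf'sq : ∀ u ∈ I, (deriv f u) ^ 2 > 1)
    (c : ℝ) :
    (∀ u ∈ I, f u * deriv (deriv f) u + (deriv f u) ^ 2 - 1 = c * Real.sqrt ((deriv f u) ^ 2 - 1)) ↔
      ∃ a, ∀ u ∈ I, f u * Real.sqrt ((deriv f u) ^ 2 - 1) = c * f u + a := by
  have hconv : Convex ℝ I := convex_iff_ordConnected.2 hIc.ordConnected
  set g : ℝ → ℝ := fun x => f x * Real.sqrt ((deriv f x) ^ 2 - 1) - c * f x with hgdef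
  have hfd : ContDiffOn ℝ (⊤ : ℕ∞) (deriv f) I := hf.deriv_of_isOpen hIo (by simp)
  -- derivative of g at points of I
  have hg : ∀ u ∈ I, HasDerivAt g
      (deriv f u / Real.sqrt ((deriv f u) ^ 2 - 1) *
        (f u * deriv (deriv f) u + (deriv f u) ^ 2 - 1 -
          c * Real.sqrt ((deriv f u) ^ 2 - 1))) u := by
    intro u hu
    have hS : (0:ℝ) < (deriv f u) ^ 2 - 1 := by linarith [hf'sq u hu]
    have hsq : Real.sqrt ((deriv f u) ^ 2 - 1) ^ 2 = (deriv f u) ^ 2 - 1 :=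
      Real.sq_sqrt hS.le
    have hspos : 0 < Real.sqrt ((deriv f u) ^ 2 - 1) := Real.sqrt_pos.2 hS
    have h1 : HasDerivAt f (deriv f u) u :=
      ((hf.differentiableOn (by simp)).differentiableAt (hIo.mem_nhds hu)).hasDerivAt
    have h2 : HasDerivAt (deriv f) (deriv (deriv f) u) u :=
      ((hfd.differentiableOn (by simp)).differentiableAt (hIo.mem_nhds hu)).hasDerivAt
    have hinner : HasDerivAt (fun x => (deriv f x) ^ 2 - 1)
        (2 * deriv f u ^ 1 * deriv (deriv f) u) u := (h2.pow 2).sub_const 1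
    have h3 : HasDerivAt (fun x => Real.sqrt ((deriv f x) ^ 2 - 1))
        (2 * deriv f u ^ 1 * deriv (deriv f) u / (2 * Real.sqrt ((deriv f u) ^ 2 - 1))) u :=
      hinner.sqrt (ne_of_gt hS)
    have h4 := (h1.mul h3).sub (h1.const_mul c)
    convert h4 using 1
    · rfl
    · rfl
    · rfl
    have hsne : Real.sqrt ((deriv f u) ^ 2 - 1) ≠ 0 := ne_of_gt hspos
    field_simp
    linear_combination (-deriv f u) * hsq
  constructor
  · intro hode
    rcases Set.eq_empty_or_nonempty I with hI | ⟨u₀, hu₀⟩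
    · exact ⟨0, by simp [hI]⟩
    refine ⟨g u₀, fun u hu => ?_⟩
    have hzero : ∀ x ∈ I, fderivWithin ℝ g I x = 0 := by
      intro x hx
      have hE : HasDerivAt g 0 x := by
        have := hg x hx
        rwa [show f x * deriv (deriv f) x + (deriv f x) ^ 2 - 1 -
            c * Real.sqrt ((deriv f x) ^ 2 - 1) = 0 by linarith [hode x hx],
          mul_zero] at this
      have h0 : (ContinuousLinearMap.smulRight (1 : ℝ →L[ℝ] ℝ) (0 : ℝ)) = 0 := by
        ext; simp
      have : HasFDerivWithinAt g (0 : ℝ →L[ℝ] ℝ) I x := by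
        rw [← h0]; exact hE.hasFDerivAt.hasFDerivWithinAt
      exact this.fderivWithin (hIo.uniqueDiffOn x hx)
    have hdiff : DifferentiableOn ℝ g I := fun x hx =>
      ((hg x hx).differentiableAt).differentiableWithinAt
    have := hconv.is_const_of_fderivWithin_eq_zero hdiff hzero hu hu₀
    have h2 : g u₀ = f u₀ * Real.sqrt ((deriv f u₀) ^ 2 - 1) - c * f u₀ := rfl
    have h3 : g u = f u * Real.sqrt ((deriv f u) ^ 2 - 1) - c * f u := rfl
    linarith [this, h2, h3]
  · rintro ⟨a, ha⟩ u hu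
    have hS : (0:ℝ) < (deriv f u) ^ 2 - 1 := by linarith [hf'sq u hu]
    have hspos : 0 < Real.sqrt ((deriv f u) ^ 2 - 1) := Real.sqrt_pos.2 hS
    have hf'ne : deriv f u ≠ 0 := by
      intro h; rw [h] at hS; norm_num at hS
    have hconst : HasDerivAt g 0 u := by
      have hev : g =ᶠ[nhds u] fun _ => a := by
        filter_upwards [hIo.mem_nhds hu] with x hx
        have := ha x hx
        simp only [hgdef]
        linarith
      exact (hasDerivAt_const u a).congr_of_eventuallyEq hev
    have huniq := (hg u hu).unique hconst
    rcases mul_eq_zero.1 huniq with h | h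
    · exact absurd h (div_ne_zero hf'ne (ne_of_gt hspos))
    · linarith
end
end

section
/- Let c be a real constant. Then f satisfies the differential equation f f'' + f'² − 1 = c √(1 − f'²) on I if and only if there exists a constant a such that f(u)·√(1 − f'(u)²) = a − c f(u) for all u ∈ I. -/
noncomputable section

open Real

/-- A function with zero derivative on an open preconnected set is constant there. -/
lemma const_of_derivZero_open (I : Set ℝ) (hIo : IsOpen I) (hIc : IsPreconnected I)
    (g : ℝ → ℝ) (hg : ∀ u ∈ I, HasDerivAt g 0 u) {x y : ℝ} (hx : x ∈ I) (hy : y ∈ I) :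
    g y = g x := by
  set U : Set ℝ := {z | z ∈ I ∧ g z = g x} with hU
  have hUopen : IsOpen U := by
    rw [isOpen_iff_mem_nhds]
    intro z hz
    obtain ⟨ε, hε, hball⟩ := Metric.isOpen_iff.mp hIo z hz.1
    have hconst : ∀ w ∈ Metric.ball z ε, g w = g z := by
      intro w hw
      have := Convex.norm_image_sub_le_of_norm_hasDerivWithin_le
        (f := g) (f' := fun _ => (0:ℝ)) (C := 0) (s := Metric.ball z ε)
        (fun v hv => (hg v (hball hv)).hasDerivWithinAt)
        (fun v _ => by simp) (convex_ball z ε) (Metric.mem_ball_self hε) hw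
      have h0 : g w - g z = 0 := norm_le_zero_iff.mp (by simpa using this)
      linarith
    have : Metric.ball z ε ⊆ U := fun w hw => ⟨hball hw, (hconst w hw).trans hz.2⟩
    exact Filter.mem_of_superset (Metric.ball_mem_nhds z hε) this
  have hclosure : closure U ∩ I ⊆ U := by
    rintro z ⟨hzc, hzI⟩
    refine ⟨hzI, ?_⟩
    have hcont : ContinuousWithinAt g U z := ((hg z hzI).continuousAt).continuousWithinAt
    have : g z ∈ closure (g '' U) := hcont.mem_closure_image hzc
    have himg : g '' U ⊆ {g x} := by rintro _ ⟨w, hw, rfl⟩; exact hw.2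
    have : g z ∈ closure ({g x} : Set ℝ) := closure_mono himg this
    simpa using this
  have hsub : I ⊆ U :=
    hIc.subset_of_closure_inter_subset hUopen ⟨x, hx, ⟨hx, rfl⟩⟩ hclosure
  exact (hsub hy).2

theorem meridian_ode_Mpp_case_ii
    (I : Set ℝ) (hIo : IsOpen I) (hIc : IsPreconnected I)
    (f : ℝ → ℝ) (hf : ContDiffOn ℝ (⊤ : ℕ∞) f I)
    (hfpos : ∀ u ∈ I, 0 < f u)
    (hf'sq : ∀ u ∈ I, (deriv f u) ^ 2 < 1)
    (hf' : ∀ u ∈ I, deriv f u ≠ 0)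
    (c : ℝ) :
    (∀ u ∈ I, f u * deriv (deriv f) u + (deriv f u) ^ 2 - 1 = c * Real.sqrt (1 - (deriv f u) ^ 2)) ↔
      ∃ a, ∀ u ∈ I, f u * Real.sqrt (1 - (deriv f u) ^ 2) = a - c * f u := by
  set g : ℝ → ℝ := fun u => f u * Real.sqrt (1 - (deriv f u) ^ 2) + c * f u with hg
  set D : ℝ → ℝ := fun u => deriv f u * Real.sqrt (1 - (deriv f u) ^ 2) +
      f u * (1 / (2 * Real.sqrt (1 - (deriv f u) ^ 2)) *
        (0 - 2 * deriv f u ^ 1 * deriv (deriv f) u)) + c * deriv f u with hD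
  -- basic facts at each point
  have hspos : ∀ u ∈ I, 0 < 1 - (deriv f u) ^ 2 := fun u hu => by
    have := hf'sq u hu; linarith
  have hsqpos : ∀ u ∈ I, 0 < Real.sqrt (1 - (deriv f u) ^ 2) := fun u hu =>
    Real.sqrt_pos.mpr (hspos u hu)
  have hderiv : ∀ u ∈ I, HasDerivAt g (D u) u := by
    intro u hu
    have hmem := hIo.mem_nhds hu
    have hd1 : HasDerivAt f (deriv f u) u :=
      ((hf.contDiffAt hmem).differentiableAt (by simp)).hasDerivAt
    have hf2 : ContDiffOn ℝ (⊤ : ℕ∞) (deriv f) I :=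
      hf.deriv_of_isOpen hIo (by simp)
    have hd2 : HasDerivAt (deriv f) (deriv (deriv f) u) u :=
      ((hf2.contDiffAt hmem).differentiableAt (by simp)).hasDerivAt
    have hinner : HasDerivAt (fun u => 1 - (deriv f u) ^ 2)
        (0 - 2 * deriv f u ^ 1 * deriv (deriv f) u) u :=
      (hasDerivAt_const u (1:ℝ)).sub (hd2.pow 2)
    have hsqrt : HasDerivAt (fun u => Real.sqrt (1 - (deriv f u) ^ 2))
        (1 / (2 * Real.sqrt (1 - (deriv f u) ^ 2)) *
          (0 - 2 * deriv f u ^ 1 * deriv (deriv f) u)) u :=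
      (Real.hasDerivAt_sqrt (hspos u hu).ne').comp u hinner
    exact (hd1.mul hsqrt).add (hd1.const_mul c)
  -- D u = 0 ↔ the ODE at u
  have key : ∀ u ∈ I, (D u = 0 ↔
      f u * deriv (deriv f) u + (deriv f u) ^ 2 - 1
        = c * Real.sqrt (1 - (deriv f u) ^ 2)) := by
    intro u hu
    set p := f u
    set q := deriv f u
    set r := deriv (deriv f) u
    set t := Real.sqrt (1 - q ^ 2) with ht
    have htpos : 0 < t := hsqpos u hu
    have hts : t ^ 2 = 1 - q ^ 2 := Real.sq_sqrt (hspos u hu).le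
    have hq : q ≠ 0 := hf' u hu
    have hfact : D u = q / t * (t ^ 2 - (p * r + q ^ 2 - 1) + (q ^ 2 - 1) + c * t) := by
      simp only [hD]
      show q * t + p * (1 / (2 * t) * (0 - 2 * q ^ 1 * r)) + c * q = _
      field_simp [htpos.ne']
      ring
    constructor
    · intro h0
      rw [hfact] at h0
      rcases mul_eq_zero.mp h0 with h | h
      · exact absurd h (div_ne_zero hq htpos.ne')
      · rw [hts] at h; linarith
    · intro hode
      rw [hfact, hts, hode]; ring
  constructor
  · intro hode
    rcases Set.eq_empty_or_nonempty I with rfl | ⟨x, hx⟩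
    · exact ⟨0, by simp⟩
    refine ⟨g x, fun u hu => ?_⟩
    have : g u = g x :=
      const_of_derivZero_open I hIo hIc g
        (fun v hv => by
          have := hderiv v hv
          rwa [(key v hv).mpr (hode v hv)] at this) hx hu
    rw [← this]
    simp only [hg]
    ring
  · rintro ⟨a, ha⟩ u hu
    have hgc : ∀ᶠ v in nhds u, g v = a := by
      filter_upwards [hIo.mem_nhds hu] with v hv
      simp only [hg]
      have := ha v hv
      linarith
    have h0 : HasDerivAt g 0 u :=
      (hasDerivAt_const u a).congr_of_eventuallyEq hgc
    have hDu : D u = 0 :=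
      ((hderiv u hu).unique h0)
    exact (key u hu).mp hDu
end
end

section
/- For the meridian surface M'_a define the tangent frame X = ∂z/∂u, Y = (1/f)·∂z/∂v and, for a vector w ∈ ℝ⁴, its normal component P(w) = w + ⟨w,X⟩X − ⟨w,Y⟩Y. Then at every point (u,v) ∈ I×J: P(∂²z/∂u∂v) = 0, P(∂²z/∂u²) = (f''g' − f'g'')·n₂, P(∂²z/∂v²) = −κ f·n₁ − f g'·n₂, and consequently the mean curvature vector ½·(−P(∂²z/∂u²) + (1/f²)·P(∂²z/∂v²)) equals −(κ/(2f))·n₁ − ((f f'' + f'² + 1)/(2 f √(f'² + 1)))·n₂. -/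
noncomputable section

open Real Matrix

/-- The neutral inner product of signature (2,2) on `ℝ⁴`. -/
def ip4 (x y : Fin 4 → ℝ) : ℝ := x 0 * y 0 + x 1 * y 1 - x 2 * y 2 - x 3 * y 3

/-- The fourth basis vector `e₄ = (0,0,0,1)`. -/
def e4 : Fin 4 → ℝ := fun i => if i = 3 then 1 else 0

/-- A normal vector field `ξ` on `I × J` is parallel in the normal bundle with respect to
the normal frame `n₁` (depending on `v`) and `n₂` (depending on `(u,v)`). -/
def NormalParallel (I J : Set ℝ) (n₁ : ℝ → Fin 4 → ℝ) (n₂ : ℝ → ℝ → Fin 4 → ℝ)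
    (ξ : ℝ → ℝ → Fin 4 → ℝ) : Prop :=
  ∀ u ∈ I, ∀ v ∈ J,
    ip4 (deriv (fun x => ξ x v) u) (n₁ v) = 0 ∧
    ip4 (deriv (fun x => ξ x v) u) (n₂ u v) = 0 ∧
    ip4 (deriv (fun y => ξ u y) v) (n₁ v) = 0 ∧
    ip4 (deriv (fun y => ξ u y) v) (n₂ u v) = 0

lemma ip4_expand (a b : Fin 4 → ℝ) : ip4 a b = a 0 * b 0 + a 1 * b 1 - a 2 * b 2 - a 3 * b 3 := rfl

lemma hasDerivAt_ip4 {a b : ℝ → Fin 4 → ℝ} {a' b' : Fin 4 → ℝ} {x : ℝ}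
    (ha : HasDerivAt a a' x) (hb : HasDerivAt b b' x) :
    HasDerivAt (fun y => ip4 (a y) (b y)) (ip4 a' (b x) + ip4 (a x) b') x := by
  have hA := hasDerivAt_pi.mp ha
  have hB := hasDerivAt_pi.mp hb
  have h := ((((hA 0).mul (hB 0)).add ((hA 1).mul (hB 1))).sub ((hA 2).mul (hB 2))).sub
    ((hA 3).mul (hB 3))
  convert h using 1
  · rfl
  · rfl
  · funext y; simp [ip4_expand]
  · simp [ip4_expand]; ring

lemma ortho_span (a b c d : Fin 4 → ℝ)
    (ha4 : a 3 = 0) (hb4 : b 3 = 0) (hc4 : c 3 = 0) (hd4 : d 3 = 0)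
    (haa : ip4 a a = 1) (hbb : ip4 b b = 1) (hcc : ip4 c c = -1)
    (hab : ip4 a b = 0) (hac : ip4 a c = 0) (hbc : ip4 b c = 0)
    (hda : ip4 d a = 0) (hdb : ip4 d b = 0) (hdc : ip4 d c = 0) :
    d = 0 := by
  simp only [ip4_expand, ha4, hb4, hc4, hd4, mul_zero, zero_mul, sub_zero] at haa hbb hcc hab hac hbc hda hdb hdc
  set A : Matrix (Fin 3) (Fin 3) ℝ := !![a 0, a 1, a 2; b 0, b 1, b 2; c 0, c 1, c 2] with hA
  have hAT : Aᵀ = !![a 0, b 0, c 0; a 1, b 1, c 1; a 2, b 2, c 2] := by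
    rw [hA]; ext i j; fin_cases i <;> fin_cases j <;> rfl
  set G : Matrix (Fin 3) (Fin 3) ℝ := !![1,0,0;0,1,0;0,0,-1] with hG
  have hAGA : A * G * Aᵀ = G := by
    rw [hAT, hA, hG, Matrix.mul_fin_three, Matrix.mul_fin_three]
    congr 1
    refine Matrix.vec3_eq (Matrix.vec3_eq ?_ ?_ ?_) (Matrix.vec3_eq ?_ ?_ ?_)
      (Matrix.vec3_eq ?_ ?_ ?_) <;>
    first
      | linear_combination haa | linear_combination hbb | linear_combination hcc
      | linear_combination hab | linear_combination hac | linear_combination hbc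
  have hdetG : G.det = -1 := by rw [hG]; simp [Matrix.det_fin_three]
  have hdet : A.det * A.det = 1 := by
    have h2 := congrArg Matrix.det hAGA
    rw [Matrix.det_mul, Matrix.det_mul, Matrix.det_transpose, hdetG] at h2
    nlinarith
  have hU : IsUnit A.det := by
    rw [isUnit_iff_ne_zero]; intro h; rw [h] at hdet; norm_num at hdet
  have : Invertible A := A.invertibleOfIsUnitDet hU
  have hinj := A.mulVec_injective_of_invertible
  have hv : A.mulVec ![d 0, d 1, -(d 2)] = A.mulVec 0 := by
    rw [Matrix.mulVec_zero, hA]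
    funext i
    fin_cases i <;>
      simp [Matrix.mulVec, dotProduct, Fin.sum_univ_three] <;> linarith
  have hw := hinj hv
  have h0 := congrFun hw 0
  have h1 := congrFun hw 1
  have h2 := congrFun hw 2
  simp only [Matrix.cons_val_zero, Matrix.cons_val_one, Matrix.head_cons, Pi.zero_apply] at h0 h1
  have h2' : d 2 = 0 := by
    have := congrFun hw 2
    simp at this
    linarith [this]
  funext i
  fin_cases i <;> simp [h0, h1, h2', hd4]

lemma ip4_comm (a b : Fin 4 → ℝ) : ip4 a b = ip4 b a := by simp [ip4_expand]; ring
lemma ip4_add_left (a b c : Fin 4 → ℝ) : ip4 (a + b) c = ip4 a c + ip4 b c := by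
  simp [ip4_expand]; ring
lemma ip4_add_right (a b c : Fin 4 → ℝ) : ip4 a (b + c) = ip4 a b + ip4 a c := by
  simp [ip4_expand]; ring
lemma ip4_smul_left (r : ℝ) (a b : Fin 4 → ℝ) : ip4 (r • a) b = r * ip4 a b := by
  simp [ip4_expand]; ring
lemma ip4_smul_right (r : ℝ) (a b : Fin 4 → ℝ) : ip4 a (r • b) = r * ip4 a b := by
  simp [ip4_expand]; ring
lemma ip4_neg_left (a b : Fin 4 → ℝ) : ip4 (-a) b = -ip4 a b := by
  simp [ip4_expand]; ring
lemma ip4_sub_left (a b c : Fin 4 → ℝ) : ip4 (a - b) c = ip4 a c - ip4 b c := by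
  simp [ip4_expand]; ring

theorem meridian_surface_Ma_second_fundamental_form
    (I J : Set ℝ) (hIo : IsOpen I) (hIc : IsPreconnected I)
    (hJo : IsOpen J) (hJc : IsPreconnected J)
    (f g : ℝ → ℝ)
    (hf : ContDiffOn ℝ (⊤ : ℕ∞) f I) (hg : ContDiffOn ℝ (⊤ : ℕ∞) g I)
    (hfpos : ∀ u ∈ I, 0 < f u)
    (hg' : ∀ u ∈ I, deriv g u = Real.sqrt ((deriv f u) ^ 2 + 1))
    (l t n : ℝ → Fin 4 → ℝ)
    (hl : ContDiffOn ℝ (⊤ : ℕ∞) l J) (ht : ContDiffOn ℝ (⊤ : ℕ∞) t J) (hn : ContDiffOn ℝ (⊤ : ℕ∞) n J)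
    (hl4 : ∀ v ∈ J, l v 3 = 0) (ht4 : ∀ v ∈ J, t v 3 = 0) (hn4 : ∀ v ∈ J, n v 3 = 0)
    (hll : ∀ v ∈ J, ip4 (l v) (l v) = 1)
    (htt : ∀ v ∈ J, ip4 (t v) (t v) = 1)
    (hnn : ∀ v ∈ J, ip4 (n v) (n v) = -1)
    (hlt : ∀ v ∈ J, ip4 (l v) (t v) = 0)
    (hln : ∀ v ∈ J, ip4 (l v) (n v) = 0)
    (htn : ∀ v ∈ J, ip4 (t v) (n v) = 0)
    (hl' : ∀ v ∈ J, deriv l v = t v)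
    (κ : ℝ → ℝ) (hκ : ∀ v, κ v = ip4 (deriv t v) (n v))
    (n₂ : ℝ → ℝ → Fin 4 → ℝ)
    (hn₂ : ∀ u v, n₂ u v = deriv g u • l v + deriv f u • e4)
    (z : ℝ → ℝ → Fin 4 → ℝ) (hz : ∀ u v, z u v = f u • l v + g u • e4)
    (X Y : ℝ → ℝ → Fin 4 → ℝ)
    (hX : ∀ u v, X u v = deriv (fun x => z x v) u)
    (hY : ∀ u v, Y u v = (f u)⁻¹ • deriv (fun y => z u y) v)
    (P : ℝ → ℝ → (Fin 4 → ℝ) → (Fin 4 → ℝ))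
    (hP : ∀ u v w, P u v w = w + ip4 w (X u v) • X u v - ip4 w (Y u v) • Y u v) :
    ∀ u ∈ I, ∀ v ∈ J,
      P u v (deriv (fun x => deriv (fun y => z x y) v) u) = 0 ∧
      P u v (deriv (deriv (fun x => z x v)) u) =
        (deriv (deriv f) u * deriv g u - deriv f u * deriv (deriv g) u) • n₂ u v ∧
      P u v (deriv (deriv (fun y => z u y)) v) =
        (-(κ v) * f u) • n v + (-(f u * deriv g u)) • n₂ u v ∧
      (2 : ℝ)⁻¹ • (-(P u v (deriv (deriv (fun x => z x v)) u)) +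
          ((f u) ^ 2)⁻¹ • P u v (deriv (deriv (fun y => z u y)) v)) =
        (-(κ v) / (2 * f u)) • n v +
        (-((f u * deriv (deriv f) u + (deriv f u) ^ 2 + 1) / (2 * f u * Real.sqrt ((deriv f u) ^ 2 + 1)))) • n₂ u v := by
  intro u hu v hv
  have hunhd : I ∈ nhds u := hIo.mem_nhds hu
  have hvnhd : J ∈ nhds v := hJo.mem_nhds hv
  -- basic differentiability
  have hfDx : ∀ x ∈ I, HasDerivAt f (deriv f x) x := fun x hx =>
    (((hf.contDiffAt (hIo.mem_nhds hx)).differentiableAt (by simp))).hasDerivAt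
  have hgDx : ∀ x ∈ I, HasDerivAt g (deriv g x) x := fun x hx =>
    (((hg.contDiffAt (hIo.mem_nhds hx)).differentiableAt (by simp))).hasDerivAt
  have hf2 : ContDiffOn ℝ 2 f I := hf.of_le (WithTop.coe_le_coe.mpr le_top)
  have hg2 : ContDiffOn ℝ 2 g I := hg.of_le (WithTop.coe_le_coe.mpr le_top)
  have hfC : ContDiffOn ℝ 1 (deriv f) I := hf2.deriv_of_isOpen hIo (by norm_num)
  have hgC : ContDiffOn ℝ 1 (deriv g) I := hg2.deriv_of_isOpen hIo (by norm_num)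
  have hfd' : HasDerivAt (deriv f) (deriv (deriv f) u) u :=
    ((hfC.contDiffAt hunhd).differentiableAt one_ne_zero).hasDerivAt
  have hgd' : HasDerivAt (deriv g) (deriv (deriv g) u) u :=
    ((hgC.contDiffAt hunhd).differentiableAt one_ne_zero).hasDerivAt
  have hlD : ∀ y ∈ J, HasDerivAt l (t y) y := fun y hy => by
    have h := ((hl.contDiffAt (hJo.mem_nhds hy)).differentiableAt (by simp)).hasDerivAt
    rwa [hl' y hy] at h
  have htD : HasDerivAt t (deriv t v) v :=
    ((ht.contDiffAt hvnhd).differentiableAt (by simp)).hasDerivAt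
  -- t' facts
  have ht3 : deriv t v 3 = 0 := by
    have h3 := (hasDerivAt_pi.mp htD) 3
    have h0 : HasDerivAt (fun y => t y 3) 0 v :=
      (hasDerivAt_const v (0:ℝ)).congr_of_eventuallyEq
        (Filter.eventuallyEq_of_mem hvnhd fun y hy => ht4 y hy)
    exact (h0.unique h3).symm
  have htl' : ip4 (deriv t v) (l v) = -1 := by
    have key := hasDerivAt_ip4 htD (hlD v hv)
    have h0 : HasDerivAt (fun y => ip4 (t y) (l y)) 0 v :=
      (hasDerivAt_const v (0:ℝ)).congr_of_eventuallyEq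
        (Filter.eventuallyEq_of_mem hvnhd fun y hy => by
          rw [ip4_comm]; exact hlt y hy)
    have h1 := h0.unique key
    have h2 := htt v hv
    linarith
  have htt' : ip4 (deriv t v) (t v) = 0 := by
    have key := hasDerivAt_ip4 htD htD
    have h0 : HasDerivAt (fun y => ip4 (t y) (t y)) 0 v :=
      (hasDerivAt_const v (1:ℝ)).congr_of_eventuallyEq
        (Filter.eventuallyEq_of_mem hvnhd fun y hy => htt y hy)
    have h1 := h0.unique key
    have h2 := ip4_comm (t v) (deriv t v)
    linarith
  have htn' : ip4 (deriv t v) (n v) = κ v := (hκ v).symm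
  -- t' = -l - κ n
  have ht' : deriv t v = -(l v) - κ v • n v := by
    have hd0 : deriv t v + l v + κ v • n v = 0 := by
      apply ortho_span (l v) (t v) (n v) _ (hl4 v hv) (ht4 v hv) (hn4 v hv)
      · simp [Pi.add_apply, Pi.smul_apply, ht3, hl4 v hv, hn4 v hv]
      · exact hll v hv
      · exact htt v hv
      · exact hnn v hv
      · exact hlt v hv
      · exact hln v hv
      · exact htn v hv
      · have h1 : ip4 (n v) (l v) = 0 := by rw [ip4_comm]; exact hln v hv
        simp only [ip4_add_left, ip4_smul_left, htl', hll v hv, h1]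
        have h2 : ip4 (t v) (l v) = 0 := by rw [ip4_comm]; exact hlt v hv
        linarith [h2]
      · have h1 : ip4 (l v) (t v) = 0 := hlt v hv
        have h2 : ip4 (n v) (t v) = 0 := by rw [ip4_comm]; exact htn v hv
        simp only [ip4_add_left, ip4_smul_left, htt', h1, h2]
        ring
      · simp only [ip4_add_left, ip4_smul_left, htn', hln v hv, hnn v hv]
        ring
    have := congrArg (fun w => w - l v - κ v • n v) hd0
    simpa [sub_eq_add_neg, add_assoc, add_comm, add_left_comm] using this
  -- scalar facts at u
  have hsq : deriv g u ^ 2 = deriv f u ^ 2 + 1 := by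
    rw [hg' u hu, Real.sq_sqrt (by positivity)]
  have hgpos : 0 < deriv g u := by
    rw [hg' u hu]; exact Real.sqrt_pos.mpr (by positivity)
  have hfu : f u ≠ 0 := ne_of_gt (hfpos u hu)
  have hkey : deriv g u * deriv (deriv g) u = deriv f u * deriv (deriv f) u := by
    have h1 : HasDerivAt (fun x => deriv g x ^ 2)
        ((2 : ℕ) * deriv g u ^ 1 * deriv (deriv g) u) u := hgd'.pow 2
    have h2 : HasDerivAt (fun x => deriv f x ^ 2 + 1)
        ((2 : ℕ) * deriv f u ^ 1 * deriv (deriv f) u) u := (hfd'.pow 2).add_const 1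
    have heq : (fun x => deriv g x ^ 2) =ᶠ[nhds u] (fun x => deriv f x ^ 2 + 1) :=
      Filter.eventuallyEq_of_mem hunhd fun x hx => by
        rw [hg' x hx, Real.sq_sqrt (by positivity)]
    have h3 := (h2.congr_of_eventuallyEq heq).unique h1
    push_cast at h3
    nlinarith [h3]
  -- derivatives of z
  have hzvD : ∀ x, ∀ y ∈ J, HasDerivAt (fun y' => z x y') (f x • t y) y := by
    intro x y hy
    simp only [hz]
    exact ((hlD y hy).const_smul (f x)).add_const (g x • e4)
  have hzuvfun : (fun x => deriv (fun y => z x y) v) = fun x => f x • t v :=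
    funext fun x => (hzvD x v hv).deriv
  have hfd : HasDerivAt f (deriv f u) u := hfDx u hu
  have hzuv : deriv (fun x => deriv (fun y => z x y) v) u = deriv f u • t v := by
    rw [hzuvfun]
    exact (hfd.smul_const (t v)).deriv
  have hzud : ∀ x ∈ I, HasDerivAt (fun x' => z x' v)
      (deriv f x • l v + deriv g x • e4) x := by
    intro x hx
    simp only [hz]
    exact ((hfDx x hx).smul_const (l v)).add ((hgDx x hx).smul_const e4)
  have hzuu : deriv (deriv (fun x' => z x' v)) u =
      deriv (deriv f) u • l v + deriv (deriv g) u • e4 := by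
    have hev : (deriv (fun x' => z x' v)) =ᶠ[nhds u]
        (fun x => deriv f x • l v + deriv g x • e4) :=
      Filter.eventuallyEq_of_mem hunhd fun x hx => (hzud x hx).deriv
    rw [hev.deriv_eq]
    exact ((hfd'.smul_const (l v)).add (hgd'.smul_const e4)).deriv
  have hzvv : deriv (deriv (fun y => z u y)) v = f u • deriv t v := by
    have hev : (deriv (fun y => z u y)) =ᶠ[nhds v] (fun y => f u • t y) :=
      Filter.eventuallyEq_of_mem hvnhd fun y hy => (hzvD u y hy).deriv
    rw [hev.deriv_eq]
    exact (htD.const_smul (f u)).deriv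
  -- frame values
  have hXv : X u v = deriv f u • l v + deriv g u • e4 := by
    rw [hX]; exact (hzud u hu).deriv
  have hYv : Y u v = t v := by
    rw [hY, (hzvD u v hv).deriv, smul_smul, inv_mul_cancel₀ hfu, one_smul]
  -- base ip4 values
  have BLL := hll v hv
  have BTT := htt v hv
  have BNN := hnn v hv
  have BLT := hlt v hv
  have BLN := hln v hv
  have BTN := htn v hv
  have BTL : ip4 (t v) (l v) = 0 := by rw [ip4_comm]; exact BLT
  have BNL : ip4 (n v) (l v) = 0 := by rw [ip4_comm]; exact BLN
  have BNT : ip4 (n v) (t v) = 0 := by rw [ip4_comm]; exact BTN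
  have BLE : ip4 (l v) e4 = 0 := by simp [ip4_expand, e4, hl4 v hv]
  have BTE : ip4 (t v) e4 = 0 := by simp [ip4_expand, e4, ht4 v hv]
  have BNE : ip4 (n v) e4 = 0 := by simp [ip4_expand, e4, hn4 v hv]
  have BEL : ip4 e4 (l v) = 0 := by rw [ip4_comm]; exact BLE
  have BET : ip4 e4 (t v) = 0 := by rw [ip4_comm]; exact BTE
  have BEN : ip4 e4 (n v) = 0 := by rw [ip4_comm]; exact BNE
  have BEE : ip4 e4 e4 = -1 := by
    simp [ip4_expand, e4, show (0:Fin 4) ≠ 3 by decide, show (1:Fin 4) ≠ 3 by decide,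
      show (2:Fin 4) ≠ 3 by decide]
  have H2 : P u v (deriv (deriv (fun x => z x v)) u) =
      (deriv (deriv f) u * deriv g u - deriv f u * deriv (deriv g) u) • n₂ u v := by
    rw [hP, hzuu, hXv, hYv, hn₂]
    simp only [ip4_add_left, ip4_add_right, ip4_smul_left, ip4_smul_right,
      BLL, BTT, BLT, BTL, BLE, BTE, BEL, BET, BEE]
    match_scalars <;>
      first
        | ring1
        | linear_combination (-(deriv (deriv f) u)) * hsq
        | linear_combination (-(deriv (deriv g) u)) * hsq
  have H3 : P u v (deriv (deriv (fun y => z u y)) v) =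
      (-(κ v) * f u) • n v + (-(f u * deriv g u)) • n₂ u v := by
    rw [hP, hzvv, ht', hXv, hYv, hn₂]
    simp only [smul_sub, smul_neg, ip4_sub_left, ip4_neg_left, ip4_add_left, ip4_add_right,
      ip4_smul_left, ip4_smul_right,
      BLL, BTT, BNN, BLT, BTL, BLN, BNL, BTN, BNT, BLE, BTE, BNE, BEL, BET, BEN, BEE]
    match_scalars <;>
      first
        | ring1
        | linear_combination (-(f u)) * hsq
        | linear_combination (f u) * hsq
        | linear_combination (2 * f u) * hsq
        | linear_combination (-(2 * f u)) * hsq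
  refine ⟨?_, H2, H3, ?_⟩
  · rw [hP, hzuv, hXv, hYv]
    simp only [ip4_smul_left, ip4_smul_right, ip4_add_right, BTL, BTE, BTT]
    match_scalars <;> ring
  · rw [H2, H3, hn₂, ← hg' u hu]
    match_scalars
    · field_simp
      linear_combination (-(deriv (deriv f) u)*(f u) - 1) * hsq + ((deriv f u)*(f u)) * hkey
    · field_simp
      linear_combination (deriv f u)*(-(deriv (deriv f) u)*(f u) - 1) * hsq + ((deriv f u)^2*(f u)) * hkey
    · field_simp
end
end
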